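/- arXiv:2601.08786 — 9 statements merged into one kernel-verified Lean document; each statement's English description precedes it below -/
import Mathlib

section
/- Let Φ be a semi-coherent structure function on n ≥ 1 components with structural signature s. For every k = 1,…,n, n!·s_k equals the number of permutations σ of {1,…,n} such that, when the components are failed one by one in the order σ(1), σ(2), …, σ(n), the system is working after each of the first k−1 failures and fails exactly at the k-th failure; i.e., s_k is the proportion of failure sequences in which the system first fails at the k-th component failure. -/
/-!
Along a permutation `σ` the states `x^{σ,l}` decrease in `l`, so for monotone `Φ` the orderings
that first fail at the `k`-th failure are those still working after `k - 1` failures minus those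
still working after `k`. Hence it suffices that `n! · S̄_l` counts the `σ` with `Φ (x^{σ,l}) = 1`:
each state with `l` failed components is `x^{σ,l}` for exactly `l! (n - l)!` permutations `σ`
(a coset of the stabilizer of `x^{id,l}`), and `n! = C(n,l) · l! · (n - l)!`.
-/

/-- `S̄ k`: the proportion of states with exactly `k` failed components in which
the system works. -/
noncomputable def Sbar (n : ℕ) (Φ : (Fin n → Bool) → Bool) (k : ℕ) : ℝ :=
  ((Finset.univ.filter (fun x : Fin n → Bool =>
      (Finset.univ.filter (fun i => x i = false)).card = k ∧ Φ x = true)).card : ℝ) /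
    (n.choose k : ℝ)

/-- The structural signature `s k = S̄_{k-1} - S̄_k`. -/
noncomputable def structSig (n : ℕ) (Φ : (Fin n → Bool) → Bool) (k : ℕ) : ℝ :=
  Sbar n Φ (k - 1) - Sbar n Φ k

/-- The state `x^{σ,l}` where exactly the first `l` components in the order `σ`
have failed (0-based positions `σ 0, …, σ (l-1)` are failed). -/
def failState (n : ℕ) (σ : Equiv.Perm (Fin n)) (l : ℕ) : Fin n → Bool :=
  fun i => decide (l ≤ ((σ.symm i : Fin n) : ℕ))

open Equiv Finset Nat

section PermutationsTransportingAFunction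

variable {α ι : Type*} [Fintype α] [DecidableEq ι]

theorem exists_perm_comp_eq_of_card_fiber_eq {f g : α → ι}
    (h : ∀ i, Fintype.card {a // g a = i} = Fintype.card {a // f a = i}) :
    ∃ σ : Perm α, f ∘ σ = g :=
  ⟨(sigmaFiberEquiv g).symm.trans ((sigmaCongrRight fun i ↦
      Fintype.equivOfCardEq (h i)).trans (sigmaFiberEquiv f)),
    funext fun a ↦ (Fintype.equivOfCardEq (h (g a)) ⟨a, rfl⟩).2⟩

theorem card_perm_comp_eq [DecidableEq α] [Fintype ι] {f g : α → ι}
    (h : ∀ i, Fintype.card {a // g a = i} = Fintype.card {a // f a = i}) :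
    Fintype.card {σ : Perm α // f ∘ σ = g} = ∏ i, (Fintype.card {a // g a = i})! := by
  obtain ⟨σ₀, hσ₀⟩ := exists_perm_comp_eq_of_card_fiber_eq h
  -- `σ ↦ σ₀⁻¹ * σ` identifies the solutions with the stabilizer of `g`
  have hg : g ∘ ⇑σ₀⁻¹ = f := by
    rw [← hσ₀, Function.comp_assoc, Perm.coe_inv, σ₀.self_comp_symm, Function.comp_id]
  rw [← DomMulAct.stabilizer_card g]
  refine Fintype.card_congr (subtypeEquiv (Equiv.mulLeft σ₀⁻¹) fun σ ↦ ?_)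
  rw [coe_mulLeft, Perm.coe_mul, ← Function.comp_assoc, hg]

end PermutationsTransportingAFunction

theorem failState_eq_comp_symm (n : ℕ) (σ : Perm (Fin n)) (l : ℕ) :
    failState n σ l = failState n 1 l ∘ σ.symm :=
  rfl

theorem card_failState_one_eq_false {n l : ℕ} (hl : l ≤ n) :
    Fintype.card {i // failState n 1 l i = false} = l := by
  simpa [failState, ← Perm.inv_def] using Fintype.card_fin_lt_of_le hl

theorem card_failState_eq_false {n l : ℕ} (hl : l ≤ n) (σ : Perm (Fin n)) :
    #{i | failState n σ l i = false} = l := by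
  rw [← Fintype.card_subtype]
  exact (Fintype.card_congr (σ.symm.subtypeEquiv fun _ ↦ Iff.rfl)).trans
    (card_failState_one_eq_false hl)

theorem card_perm_failState_eq {n l : ℕ} (hl : l ≤ n) {x : Fin n → Bool}
    (hx : #{i | x i = false} = l) :
    #{σ : Perm (Fin n) | failState n σ l = x} = l ! * (n - l)! := by
  have hfalse := card_failState_one_eq_false hl
  have htrue : Fintype.card {i // failState n 1 l i = true} = n - l := by
    simp only [← Bool.not_eq_false, Fintype.card_subtype_compl, hfalse, Fintype.card_fin]
  have hfiber : ∀ b, Fintype.card {i // failState n 1 l i = b} = Fintype.card {i // x i = b} := by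
    have : Fintype.card {i // x i = false} = l := by rwa [Fintype.card_subtype]
    rintro (_ | _)
    · rw [hfalse, this]
    · simp only [← Bool.not_eq_false, Fintype.card_subtype_compl, hfalse, this, Fintype.card_fin]
  have hiff (σ : Perm (Fin n)) : failState n σ l = x ↔ x ∘ σ = failState n 1 l := by
    rw [failState_eq_comp_symm, Equiv.comp_symm_eq, eq_comm]
  rw [← Fintype.card_subtype, Fintype.card_congr (subtypeEquivRight hiff),
    card_perm_comp_eq hfiber, Fintype.prod_bool, htrue, hfalse, mul_comm]

theorem card_perm_works_at_failState {n l : ℕ} (hl : l ≤ n) (Φ : (Fin n → Bool) → Bool) :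
    #{σ : Perm (Fin n) | Φ (failState n σ l) = true} =
      #{x : Fin n → Bool | #{i | x i = false} = l ∧ Φ x = true} * (l ! * (n - l)!) := by
  rw [card_eq_sum_card_fiberwise (f := fun σ ↦ failState n σ l)
    (t := {x | #{i | x i = false} = l ∧ Φ x = true})]
  · refine sum_const_nat fun x hx ↦ ?_
    rw [mem_filter] at hx
    rw [filter_filter, ← card_perm_failState_eq hl hx.2.1]
    exact congrArg card <| filter_congr fun σ _ ↦ and_iff_right_of_imp fun h ↦ h ▸ hx.2.2
  · intro σ hσ
    simp_all [card_failState_eq_false hl]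

theorem factorial_mul_Sbar {n l : ℕ} (hl : l ≤ n) (Φ : (Fin n → Bool) → Bool) :
    (n ! : ℝ) * Sbar n Φ l = #{σ : Perm (Fin n) | Φ (failState n σ l) = true} := by
  have : (n.choose l : ℝ) ≠ 0 := by exact_mod_cast (Nat.choose_pos hl).ne'
  rw [card_perm_works_at_failState hl, Sbar, ← Nat.choose_mul_factorial_mul_factorial hl]
  push_cast
  field_simp

theorem failState_antitone (n : ℕ) (σ : Perm (Fin n)) : Antitone (failState n σ) :=
  fun _ _ hlk i ↦ by
    simpa only [failState, Bool.le_iff_imp, decide_eq_true_eq] using hlk.trans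

theorem Antitone.forall_lt_eq_true_and_eq_false_iff {p : ℕ → Bool} (hp : Antitone p) {k : ℕ}
    (hk : 1 ≤ k) : ((∀ l < k, p l = true) ∧ p k = false) ↔ p (k - 1) = true ∧ ¬p k = true := by
  refine ⟨fun h ↦ ⟨h.1 _ (by omega), by simp [h.2]⟩, fun h ↦ ⟨fun l hl ↦ ?_, by simpa using h.2⟩⟩
  exact Bool.le_iff_imp.mp (hp (by omega : l ≤ k - 1)) h.1

theorem stmt0_general (n : ℕ) (Φ : (Fin n → Bool) → Bool)
    (hmono : ∀ x y : Fin n → Bool, (∀ i, x i ≤ y i) → Φ x ≤ Φ y)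
    (k : ℕ) (hk1 : 1 ≤ k) (hkn : k ≤ n) :
    (n.factorial : ℝ) * structSig n Φ k =
      ((Finset.univ.filter (fun σ : Equiv.Perm (Fin n) =>
        (∀ l < k, Φ (failState n σ l) = true) ∧ Φ (failState n σ k) = false)).card : ℝ) := by
  have hanti (σ : Perm (Fin n)) : Antitone fun l ↦ Φ (failState n σ l) :=
    (show Monotone Φ from hmono).comp_antitone (failState_antitone n σ)
  have hsub : ({σ | Φ (failState n σ k) = true} : Finset (Perm (Fin n))) ⊆
      ({σ | Φ (failState n σ (k - 1)) = true} : Finset (Perm (Fin n))) :=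
    monotone_filter_right _ fun σ _ ↦ Bool.le_iff_imp.mp (hanti σ (k.sub_le 1))
  rw [filter_congr fun σ _ ↦ (hanti σ).forall_lt_eq_true_and_eq_false_iff hk1, filter_and_not,
    card_sdiff_of_subset hsub, Nat.cast_sub (card_le_card hsub), structSig, mul_sub,
    factorial_mul_Sbar (by omega), factorial_mul_Sbar hkn]

/-- For a semi-coherent system, `n! · s_k` is the number of permutations along which
the system first fails exactly at the `k`-th component failure. -/
theorem stmt0 (n : ℕ) (hn : 1 ≤ n) (Φ : (Fin n → Bool) → Bool)
    (hmono : ∀ x y : Fin n → Bool, (∀ i, x i ≤ y i) → Φ x ≤ Φ y)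
    (hΦ0 : Φ (fun _ => false) = false) (hΦ1 : Φ (fun _ => true) = true)
    (k : ℕ) (hk1 : 1 ≤ k) (hkn : k ≤ n) :
    (n.factorial : ℝ) * structSig n Φ k =
      ((Finset.univ.filter (fun σ : Equiv.Perm (Fin n) =>
        (∀ l < k, Φ (failState n σ l) = true) ∧ Φ (failState n σ k) = false)).card : ℝ) :=
  stmt0_general n Φ hmono k hk1 hkn
end

section
/- Let Ψ : ℕ → ℝ be any function and define λ^{(m)}_k := Σ_{i=0}^{k−1} C(k−1,i)·(−1)^i·(Ψ(m−k+i+1) − Ψ(m−k+i)) for 1 ≤ k ≤ m. Then for all integers 0 ≤ i < j ≤ n one has C(n−i, j−i)·λ^{(n−i)}_{j−i} = Σ_{k=i}^{j} (−1)^{j−k+1}·(C(n,j)·C(j,k)·C(k,i) / C(n,i))·Ψ(n−k), an identity in ℝ. -/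
/-- The Lévy-frailty Marshall–Olkin shock rate `λ^{(m)}_k` associated to a set of
`k` components out of `m`, for a Laplace exponent `Ψ`. -/
noncomputable def lfmoRate (Ψ : ℕ → ℝ) (m k : ℕ) : ℝ :=
  ∑ i ∈ Finset.range k,
    ((k - 1).choose i : ℝ) * (-1 : ℝ) ^ i * (Ψ (m - k + i + 1) - Ψ (m - k + i))

/-!
Expanding the differences `Ψ (m - k + i + 1) - Ψ (m - k + i)` by Pascal's rule turns `λ^{(m)}_k`
into the alternating binomial sum `∑ₜ (-1)^(k-t+1) C(k,t) Ψ(m-t)`. On the right-hand side, the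
trinomial revision `C(n,j) C(j,k) C(k,i) = C(n,i) C(n-i,j-i) C(j-i,k-i)` cancels `C(n,i)` and,
after the substitution `k = i + t`, leaves `C(n-i,j-i)` times the same sum with `m = n-i`,
`k = j-i`.
-/

open Finset

theorem Finset.sum_range_choose_mul_neg_one_pow_mul_sub {R : Type*} [CommRing R]
    (f : ℕ → R) (k : ℕ) :
    ∑ i ∈ range (k + 1), (k.choose i : R) * (-1) ^ i * (f (i + 1) - f i) =
      ∑ i ∈ range (k + 2), ((k + 1).choose i : R) * ((-1) ^ (i + 1) * f i) := by
  rw [sum_choose_succ_mul (fun i _ => (-1 : R) ^ (i + 1) * f i), ← sum_add_distrib]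
  refine sum_congr rfl fun i _ => ?_
  ring

theorem Nat.choose_mul_choose_mul_choose {n j k i : ℕ} (hik : i ≤ k) (hkj : k ≤ j) :
    n.choose j * j.choose k * k.choose i =
      n.choose i * (n - i).choose (j - i) * (j - i).choose (k - i) := by
  have hnk : n - i - (k - i) = n - k := by omega
  have hjk : j - i - (k - i) = j - k := by omega
  calc n.choose j * j.choose k * k.choose i
      = n.choose k * k.choose i * (n - k).choose (j - k) := by rw [Nat.choose_mul hkj]; ring
    _ = n.choose i * ((n - i).choose (k - i) * (n - i - (k - i)).choose (j - i - (k - i))) := by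
      rw [Nat.choose_mul hik, hnk, hjk]; ring
    _ = n.choose i * (n - i).choose (j - i) * (j - i).choose (k - i) := by
      rw [← Nat.choose_mul (Nat.sub_le_sub_right hkj i)]; ring

theorem lfmoRate_eq_sum_range (Ψ : ℕ → ℝ) {m k : ℕ} (hk : 0 < k) (hkm : k ≤ m) :
    lfmoRate Ψ m k = ∑ t ∈ range (k + 1), (-1 : ℝ) ^ (k - t + 1) * (k.choose t : ℝ) * Ψ (m - t) := by
  obtain ⟨l, rfl⟩ : ∃ l, k = l + 1 := ⟨k - 1, by omega⟩
  rw [lfmoRate, Nat.add_sub_cancel]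
  refine (sum_range_choose_mul_neg_one_pow_mul_sub (fun s => Ψ (m - (l + 1) + s)) l).trans ?_
  rw [← sum_range_reflect]
  refine sum_congr rfl fun t ht => ?_
  have htk : t ≤ l + 1 := Nat.lt_succ_iff.mp (mem_range.mp ht)
  rw [show l + 2 - 1 - t = l + 1 - t by omega, Nat.choose_symm htk,
    show m - (l + 1) + (l + 1 - t) = m - t by omega]
  ring

/-- The transition rate of the continuous-time Markov chain of the number of failed
components, from `i` failed to `j` failed components, equals the stated alternating
sum of values of `Ψ`. -/
theorem stmt4 (Ψ : ℕ → ℝ) (n i j : ℕ) (hij : i < j) (hjn : j ≤ n) :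
    ((n - i).choose (j - i) : ℝ) * lfmoRate Ψ (n - i) (j - i) =
      ∑ k ∈ Finset.Icc i j,
        (-1 : ℝ) ^ (j - k + 1) *
          ((n.choose j : ℝ) * (j.choose k : ℝ) * (k.choose i : ℝ) / (n.choose i : ℝ)) *
          Ψ (n - k) := by
  have hni : (n.choose i : ℝ) ≠ 0 := Nat.cast_ne_zero.mpr (Nat.choose_pos (by omega)).ne'
  rw [lfmoRate_eq_sum_range Ψ (by omega) (by omega), mul_sum, ← Ico_add_one_right_eq_Icc,
    sum_Ico_eq_sum_range, show j + 1 - i = j - i + 1 by omega]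
  refine sum_congr rfl fun t ht => ?_
  have htj : t ≤ j - i := Nat.lt_succ_iff.mp (mem_range.mp ht)
  have hrev := Nat.choose_mul_choose_mul_choose (n := n) (Nat.le_add_right i t) (by omega : i + t ≤ j)
  rw [Nat.add_sub_cancel_left] at hrev
  rw [show j - (i + t) = j - i - t by omega, show n - (i + t) = n - i - t by omega,
    ← Nat.cast_mul, ← Nat.cast_mul, hrev]
  push_cast
  field_simp
end

section
/- Let Ψ : ℕ → ℝ satisfy Ψ(0) = 0 and define λ^{(m)}_k := Σ_{i=0}^{k−1} C(k−1,i)·(−1)^i·(Ψ(m−k+i+1) − Ψ(m−k+i)) for 1 ≤ k ≤ m. Then for all integers n ≥ 1, 0 ≤ i ≤ n−1 and 1 ≤ k ≤ n−i, one has Σ_{l=0}^{i} C(i,l)·λ^{(n)}_{k+l} = λ^{(n−i)}_k. (This is the dimensional consistency of the Lévy-frailty Marshall–Olkin rates: the aggregate rate of shocks in the n-component model whose intersection with a fixed set of n−i surviving components is a given set of size k equals the corresponding rate of the (n−i)-component model.) -/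
/-!
With `Δ` the forward difference, `λ^{(m)}_k = (-1)^{k-1} Δ^k Ψ (m - k)`. Putting `g = Δ^k Ψ` and
`p = n - i - k`, the claim becomes `∑_l C(i,l) (-1)^l Δ^l g (p + (i - l)) = g p`, which is the
operator identity `(E - Δ)^i = 1` for the shift `E = 1 + Δ`, expanded by the binomial theorem.
-/

open Finset Function fwdDiff fwdDiff_aux

theorem sum_neg_one_pow_mul_choose_smul_fwdDiff_iter {M G : Type*} [AddCommMonoid M]
    [AddCommGroup G] (h : M) (f : M → G) (n : ℕ) (y : M) :
    ∑ l ∈ range (n + 1), ((-1 : ℤ) ^ l * n.choose l) • (Δ_[h])^[l] f (y + (n - l) • h) = f y := by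
  have hid : -fwdDiffₗ M G h + shiftₗ M G h = 1 := by simp [shiftₗ]
  have hcomm : Commute (-fwdDiffₗ M G h) (shiftₗ M G h) :=
    ((Commute.refl _).add_right (Commute.one_right _)).neg_left
  have hexp := congr_fun (LinearMap.congr_fun (hcomm.add_pow n) f) y
  rw [hid, one_pow, Module.End.one_apply] at hexp
  rw [hexp, LinearMap.sum_apply, Finset.sum_apply]
  refine sum_congr rfl fun l _ => ?_
  have hterm : (-fwdDiffₗ M G h) ^ l * shiftₗ M G h ^ (n - l) * (n.choose l : Module.End ℤ _) =
      (((-1 : ℤ) ^ l * n.choose l : ℤ) : Module.End ℤ (M → G)) *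
        (fwdDiffₗ M G h ^ l * shiftₗ M G h ^ (n - l)) := by
    rw [neg_pow, mul_assoc ((-1) ^ l), mul_assoc ((-1) ^ l), ← (Nat.cast_commute _ _).eq,
      ← mul_assoc]
    push_cast
    rfl
  rw [hterm, Module.End.mul_apply, Module.End.intCast_apply, Module.End.mul_apply, Pi.smul_apply,
    coe_fwdDiffₗ_pow, ← fwdDiff_iter_comp_add, ← funext (shiftₗ_pow_apply h f (n - l))]

theorem lfmoRate_eq_fwdDiff_iter (Ψ : ℕ → ℝ) {m k : ℕ} (hk : 0 < k) :
    lfmoRate Ψ m k = (-1) ^ (k - 1) * (Δ_[1])^[k] Ψ (m - k) := by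
  obtain ⟨k, rfl⟩ := Nat.exists_eq_add_one_of_ne_zero hk.ne'
  rw [Nat.add_sub_cancel, iterate_succ_apply, fwdDiff_iter_eq_sum_shift, mul_sum, lfmoRate,
    Nat.add_sub_cancel]
  refine sum_congr rfl fun j hj => ?_
  obtain ⟨d, rfl⟩ := Nat.exists_eq_add_of_le (Nat.lt_succ_iff.mp (mem_range.mp hj))
  rw [zsmul_eq_mul, fwdDiff, Nat.add_sub_cancel_left, smul_eq_mul, mul_one, pow_add]
  push_cast
  rcases neg_one_pow_eq_or ℝ d with hd | hd <;> rw [hd] <;> ring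

theorem stmt5_general (Ψ : ℕ → ℝ) (n i k : ℕ)
    (hk1 : 1 ≤ k) (hk : k ≤ n - i) :
    ∑ l ∈ Finset.range (i + 1), (i.choose l : ℝ) * lfmoRate Ψ n (k + l) =
      lfmoRate Ψ (n - i) k := by
  have hterm : ∀ l ∈ range (i + 1), (i.choose l : ℝ) * lfmoRate Ψ n (k + l) =
      (-1) ^ (k - 1) * (((-1 : ℤ) ^ l * i.choose l) •
        (Δ_[1])^[l] ((Δ_[1])^[k] Ψ) (n - i - k + (i - l) • 1)) := by
    intro l hl
    have hli : l ≤ i := Nat.lt_succ_iff.mp (mem_range.mp hl)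
    rw [lfmoRate_eq_fwdDiff_iter Ψ (by omega), ← iterate_add_apply, zsmul_eq_mul, smul_eq_mul,
      mul_one, show n - (k + l) = n - i - k + (i - l) by omega,
      show k + l - 1 = k - 1 + l by omega, add_comm l k, pow_add]
    push_cast
    ring
  rw [sum_congr rfl hterm, ← mul_sum, sum_neg_one_pow_mul_choose_smul_fwdDiff_iter,
    lfmoRate_eq_fwdDiff_iter Ψ hk1, Nat.sub_right_comm]

/-- Dimensional consistency of the Lévy-frailty Marshall–Olkin rates:
`Σ_{l=0}^{i} C(i,l) · λ^{(n)}_{k+l} = λ^{(n-i)}_k`. -/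
theorem stmt5 (Ψ : ℕ → ℝ) (hΨ0 : Ψ 0 = 0) (n i k : ℕ) (hn : 1 ≤ n)
    (hi : i ≤ n - 1) (hk1 : 1 ≤ k) (hk : k ≤ n - i) :
    ∑ l ∈ Finset.range (i + 1), (i.choose l : ℝ) * lfmoRate Ψ n (k + l) =
      lfmoRate Ψ (n - i) k :=
  stmt5_general Ψ n i k hk1 hk
end

section
/- Let Ψ : ℕ → ℝ satisfy Ψ(0) = 0 and define λ^{(m)}_k := Σ_{i=0}^{k−1} C(k−1,i)·(−1)^i·(Ψ(m−k+i+1) − Ψ(m−k+i)) for 1 ≤ k ≤ m. Then for all integers 1 ≤ j ≤ n, Σ_{k=1}^{n} (C(n,k) − C(n−j,k))·λ^{(n)}_k = Ψ(j). In particular (j = n) the sum of all shock rates Σ_{k=1}^{n} C(n,k)·λ^{(n)}_k equals Ψ(n), so the series subsystem of any j of the n components has exponentially distributed lifetime with rate Ψ(j). -/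
open Finset Function fwdDiff fwdDiff_aux

theorem sum_neg_one_pow_choose_smul_fwdDiff_iter_sub {G : Type*} [AddCommGroup G] (f : ℕ → G)
    (m : ℕ) :
    ∑ k ∈ range (m + 1), ((-1 : ℤ) ^ k * m.choose k) • Δ_[1] ^[k] f (m - k) = f 0 := by
  have hS : shiftₗ ℕ G 1 + -fwdDiffₗ ℕ G 1 = 1 := by simp [shiftₗ]
  have hcomm : Commute (-fwdDiffₗ ℕ G 1) (shiftₗ ℕ G 1) :=
    ((Commute.refl _).add_right (Commute.one_right _)).neg_left
  have hbinom := congr_fun (LinearMap.congr_fun (hcomm.add_pow m) f) 0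
  rw [add_comm, hS, one_pow, Module.End.one_apply, LinearMap.sum_apply, Finset.sum_apply] at hbinom
  rw [hbinom]
  refine sum_congr rfl fun k _ => ?_
  have hshift : (fwdDiffₗ ℕ G 1 ^ k) ((shiftₗ ℕ G 1 ^ (m - k)) f) 0 = Δ_[1] ^[k] f (m - k) := by
    have : (shiftₗ ℕ G 1 ^ (m - k)) f = fun r ↦ f (r + (m - k)) := by
      funext r; rw [shiftₗ_pow_apply, smul_eq_mul, mul_one]
    rw [coe_fwdDiffₗ_pow, this, fwdDiff_iter_comp_add, zero_add]
  have hsign : ((-1 : Module.End ℤ (ℕ → G)) ^ k) = (((-1 : ℤ) ^ k : ℤ) : Module.End ℤ (ℕ → G)) := by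
    push_cast; rfl
  rw [neg_pow (fwdDiffₗ ℕ G 1), Module.End.mul_apply, Module.End.mul_apply, Module.End.mul_apply,
    Module.End.natCast_apply, hsign, Module.End.intCast_apply]
  simp only [map_nsmul, Pi.smul_apply, hshift, mul_smul, natCast_zsmul]

theorem lfmoRate_eq_neg_one_pow_mul_fwdDiff_iter (Ψ : ℕ → ℝ) (m : ℕ) {k : ℕ} (hk : k ≠ 0) :
    lfmoRate Ψ m k = (-1) ^ (k - 1) * Δ_[1] ^[k] Ψ (m - k) := by
  obtain ⟨k, rfl⟩ := Nat.exists_eq_add_one_of_ne_zero hk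
  rw [iterate_succ_apply, fwdDiff_iter_eq_sum_shift, lfmoRate, Nat.add_sub_cancel, mul_sum]
  refine sum_congr rfl fun i hi => ?_
  obtain ⟨d, rfl⟩ := Nat.exists_eq_add_of_le (Nat.lt_succ_iff.mp (mem_range.mp hi))
  have hsign : (-1 : ℝ) ^ (i + d) * (-1) ^ d = (-1) ^ i := by
    rw [pow_add, mul_assoc, ← pow_add, Even.neg_one_pow ⟨d, rfl⟩, mul_one]
  simp only [zsmul_eq_mul, Nat.add_sub_cancel_left, smul_eq_mul, mul_one, fwdDiff]
  push_cast
  rw [← hsign]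
  ring

theorem sum_choose_mul_lfmoRate (Ψ : ℕ → ℝ) (m : ℕ) :
    ∑ k ∈ Icc 1 m, (m.choose k : ℝ) * lfmoRate Ψ m k = Ψ m - Ψ 0 := by
  have h := sum_neg_one_pow_choose_smul_fwdDiff_iter_sub Ψ m
  rw [range_eq_Ico, sum_eq_sum_Ico_succ_bot (by omega), zero_add, Ico_add_one_right_eq_Icc] at h
  simp only [pow_zero, Nat.choose_zero_right, Nat.cast_one, mul_one, one_smul, iterate_zero, id_eq,
    Nat.sub_zero] at h
  rw [← h, sub_add_cancel_left, ← sum_neg_distrib]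
  refine sum_congr rfl fun k hk => ?_
  obtain ⟨k, rfl⟩ := Nat.exists_eq_add_one_of_ne_zero (by have := (mem_Icc.mp hk).1; omega : k ≠ 0)
  rw [lfmoRate_eq_neg_one_pow_mul_fwdDiff_iter Ψ m k.succ_ne_zero, zsmul_eq_mul]
  push_cast
  ring

theorem lfmoRate_add_right (Ψ : ℕ → ℝ) {m k : ℕ} (j : ℕ) (hk : k ≤ m) :
    lfmoRate Ψ (m + j) k = lfmoRate (fun t ↦ Ψ (t + j)) m k := by
  refine sum_congr rfl fun i _ => ?_
  rw [show m + j - k + i = m - k + i + j by omega, add_right_comm]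

theorem sum_choose_mul_lfmoRate_add (Ψ : ℕ → ℝ) (m j : ℕ) :
    ∑ k ∈ Icc 1 (m + j), (m.choose k : ℝ) * lfmoRate Ψ (m + j) k = Ψ (m + j) - Ψ j := by
  have hzero : ∀ k ∈ Icc 1 (m + j), k ∉ Icc 1 m → (m.choose k : ℝ) * lfmoRate Ψ (m + j) k = 0 :=
    fun k hk hk' => by
      rw [Nat.choose_eq_zero_of_lt (by simp only [mem_Icc] at hk hk'; omega), Nat.cast_zero,
        zero_mul]
  rw [← sum_subset (Icc_subset_Icc_right (m.le_add_right j)) hzero,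
    sum_congr rfl fun k hk => by rw [lfmoRate_add_right Ψ j (mem_Icc.mp hk).2],
    sum_choose_mul_lfmoRate, zero_add]

theorem stmt6_general (Ψ : ℕ → ℝ) (hΨ0 : Ψ 0 = 0) (n j : ℕ) (hjn : j ≤ n) :
    ∑ k ∈ Finset.Icc 1 n,
        ((n.choose k : ℝ) - ((n - j).choose k : ℝ)) * lfmoRate Ψ n k = Ψ j := by
  obtain ⟨m, rfl⟩ := Nat.exists_eq_add_of_le' hjn
  rw [Nat.add_sub_cancel]
  simp only [sub_mul, sum_sub_distrib, sum_choose_mul_lfmoRate, sum_choose_mul_lfmoRate_add, hΨ0]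
  ring

/-- The aggregate rate of the shocks hitting a fixed set of `j` of the `n`
components equals `Ψ j`: `Σ_{k=1}^{n} (C(n,k) - C(n-j,k)) · λ^{(n)}_k = Ψ j`. -/
theorem stmt6 (Ψ : ℕ → ℝ) (hΨ0 : Ψ 0 = 0) (n j : ℕ) (hj1 : 1 ≤ j) (hjn : j ≤ n) :
    ∑ k ∈ Finset.Icc 1 n,
        ((n.choose k : ℝ) - ((n - j).choose k : ℝ)) * lfmoRate Ψ n k = Ψ j :=
  stmt6_general Ψ hΨ0 n j hjn
end

section
/- For all integers 1 ≤ k ≤ n, the identity Σ_{i=n−k+1}^{n} C(n,i)·C(i−1, n−k)·(−1)^{i−n+k−1}·(1/i) = Σ_{i=n−k+1}^{n} 1/i holds in ℝ (equivalently in ℚ). -/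
/-!
Put `m = n - k` and `i = m + 1 + j`, so that the left side is a sum over `j < d` with `d = k`.
Pascal's rule applied to `C(m + d + 1, m + 1 + j)` shows that adding a term increases the sum by
`∑_{j ≤ d} (-1)^j C(m + d, m + j) C(m + j, m) / (m + 1 + j)`. Absorbing `1 / (m + 1 + j)` into
`C(m + d, m + j)` turns this into `1 / (m + d + 1)` times the unweighted alternating sum with
`d + 1` terms, and that sum is `1` by the same Pascal recursion, whose increments
`C(m + d, m) ∑_j (-1)^j C(d, j)` vanish for `d > 0`.
-/

open Finset

theorem sum_choose_add_succ_mul {R : Type*} [NonAssocSemiring R] (f : ℕ → R) (m d : ℕ) :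
    ∑ j ∈ range (d + 1), ((m + (d + 1)).choose (m + 1 + j) : R) * f j =
      ∑ j ∈ range (d + 1), ((m + d).choose (m + j) : R) * f j +
        ∑ j ∈ range d, ((m + d).choose (m + 1 + j) : R) * f j := by
  have hpascal (j : ℕ) : (m + (d + 1)).choose (m + 1 + j) =
      (m + d).choose (m + j) + (m + d).choose (m + 1 + j) := by
    rw [← add_assoc, add_right_comm m 1 j, Nat.choose_succ_succ']
  simp only [hpascal, Nat.cast_add, add_mul, sum_add_distrib, sum_range_succ _ d,
    Nat.choose_eq_zero_of_lt (by omega : m + d < m + 1 + d), Nat.cast_zero, zero_mul, add_zero]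
  abel

theorem choose_add_mul_choose (m d j : ℕ) :
    (m + d).choose (m + j) * (m + j).choose m = (m + d).choose m * d.choose j := by
  rw [Nat.choose_mul (Nat.le_add_right m j), Nat.add_sub_cancel_left, Nat.add_sub_cancel_left]

theorem alternating_sum_choose_mul_choose {R : Type*} [Ring R] (m : ℕ) {d : ℕ} (hd : 0 < d) :
    ∑ j ∈ range d, ((m + d).choose (m + 1 + j) : R) * (m + j).choose m * (-1) ^ j = 1 := by
  induction d with
  | zero => omega
  | succ d ih =>
    rcases d.eq_zero_or_pos with rfl | hd0
    · simp
    have hvanish : ∑ j ∈ range (d + 1),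
        ((m + d).choose (m + j) : R) * ((m + j).choose m * (-1) ^ j) = 0 := by
      have h := congrArg (Int.cast : ℤ → R) (Int.alternating_sum_range_choose_of_ne hd0.ne')
      push_cast at h
      simp_rw [← mul_assoc, ← Nat.cast_mul, choose_add_mul_choose, Nat.cast_mul, mul_assoc,
        ← mul_sum]
      simp only [Nat.cast_comm (d.choose _), h, mul_zero]
    simp only [mul_assoc] at ih ⊢
    rw [sum_choose_add_succ_mul, hvanish, zero_add, ih hd0]

theorem cast_choose_div_add_one {K : Type*} [Field K] [CharZero K] (n k : ℕ) :
    (n.choose k : K) / (k + 1) = (n + 1).choose (k + 1) / (n + 1) := by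
  rw [div_eq_div_iff (Nat.cast_add_one_ne_zero k) (Nat.cast_add_one_ne_zero n), mul_comm]
  exact_mod_cast Nat.add_one_mul_choose_eq n k

theorem alternating_sum_choose_mul_choose_div {K : Type*} [Field K] [CharZero K] (m d : ℕ) :
    ∑ j ∈ range d, ((m + d).choose (m + 1 + j) : K) * (m + j).choose m * (-1) ^ j / (m + 1 + j) =
      ∑ j ∈ range d, 1 / (m + 1 + j : K) := by
  induction d with
  | zero => simp
  | succ d ih =>
    have hlast : ∑ j ∈ range (d + 1),
        ((m + d).choose (m + j) : K) * ((m + j).choose m * ((-1) ^ j / (m + 1 + j))) =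
          1 / (m + 1 + d) := by
      calc _ = ∑ j ∈ range (d + 1),
              ((m + (d + 1)).choose (m + 1 + j) : K) * (m + j).choose m * (-1) ^ j / (m + d + 1) :=
            sum_congr rfl fun j _ => by
              calc _ = ((m + d).choose (m + j) : K) / ((m + j : ℕ) + 1) *
                    ((m + j).choose m * (-1) ^ j) := by push_cast; ring
                _ = _ := by
                  rw [cast_choose_div_add_one, add_right_comm m j 1, add_assoc m d 1]
                  push_cast
                  ring
        _ = 1 / (m + 1 + d) := by
          rw [← sum_div, alternating_sum_choose_mul_choose m d.succ_pos]
          ring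
    simp only [mul_div_assoc, mul_assoc] at ih ⊢
    rw [sum_choose_add_succ_mul, hlast, ih, sum_range_succ]
    ring

theorem stmt7_general (n k : ℕ) (hkn : k ≤ n) :
    ∑ i ∈ Finset.Icc (n - k + 1) n,
        (n.choose i : ℝ) * ((i - 1).choose (n - k) : ℝ) * (-1 : ℝ) ^ (i + k - (n + 1)) *
          (1 / (i : ℝ)) =
      ∑ i ∈ Finset.Icc (n - k + 1) n, 1 / (i : ℝ) := by
  obtain ⟨m, rfl⟩ : ∃ m, n = m + k := ⟨n - k, by omega⟩
  simp only [Nat.add_sub_cancel, ← Ico_add_one_right_eq_Icc, sum_Ico_eq_sum_range,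
    show m + k + 1 - (m + 1) = k by omega]
  push_cast
  rw [← alternating_sum_choose_mul_choose_div]
  refine sum_congr rfl fun j _ => ?_
  rw [show m + 1 + j - 1 = m + j by omega, show m + 1 + j + k - (m + k + 1) = j by omega]
  ring

/-- The combinatorial identity reducing the general formula for the expected `k`-th
order statistic of a Lévy-frailty Marshall–Olkin vector to a harmonic sum in the
i.i.d. exponential case. -/
theorem stmt7 (n k : ℕ) (hk1 : 1 ≤ k) (hkn : k ≤ n) :
    ∑ i ∈ Finset.Icc (n - k + 1) n,
        (n.choose i : ℝ) * ((i - 1).choose (n - k) : ℝ) * (-1 : ℝ) ^ (i + k - (n + 1)) *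
          (1 / (i : ℝ)) =
      ∑ i ∈ Finset.Icc (n - k + 1) n, 1 / (i : ℝ) :=
  stmt7_general n k hkn
end

section
/- Let n ≥ 1 and let P be a real (n+1)×(n+1) matrix with rows and columns indexed by 0,…,n such that P_{i,j} = 0 whenever j ≤ i. Define Q̄_{i,j} recursively by Q̄_{0,j} := P_{0,j} for j > 0, Q̄_{i,j} := Q̄_{i−1,j} + Q̄_{i−1,i}·P_{i,j} for 1 ≤ i < j ≤ n, and Q̄_{i,j} := 0 for j ≤ i. Then for all 0 ≤ i < j ≤ n, Q̄_{i,j} = Σ_{l₁=0}^{i} ( Σ_{l=0}^{l₁} (P^l)_{0,l₁} )·P_{l₁,j}, where (P^l)_{0,l₁} denotes the (0,l₁) entry of the l-th matrix power of P. -/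
/-!
Write `S = ∑_{l ≤ n} P ^ l`. Since `P` is strictly upper triangular, `(P ^ l) 0 k = 0` for `l > k`,
so the inner sum of the formula is just `S 0 k`, and `P ^ (n + 1) = 0`, so the geometric series
gives `S = 1 + S * P`. Off the diagonal this reads `S 0 i = ∑_{l < i} S 0 l * P l i`, which is
exactly the recursion `Q̄_{i+1,j} = Q̄_{i,j} + Q̄_{i,i+1} P_{i+1,j}` satisfied by the right-hand side.
-/

open Finset

theorem Fin.sum_filter_val_le_succ {M : Type*} [AddCommMonoid M] {n : ℕ} (f : Fin (n + 1) → M)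
    (i : Fin n) :
    ∑ l ∈ univ.filter (fun l : Fin (n + 1) => (l : ℕ) ≤ i.succ), f l
      = ∑ l ∈ univ.filter (fun l : Fin (n + 1) => (l : ℕ) ≤ i.castSucc), f l + f i.succ := by
  have hsplit : univ.filter (fun l : Fin (n + 1) => (l : ℕ) ≤ i.succ)
      = insert i.succ (univ.filter fun l : Fin (n + 1) => (l : ℕ) ≤ i.castSucc) := by
    ext l
    simp only [mem_filter, mem_univ, true_and, mem_insert, Fin.ext_iff, Fin.val_succ,
      Fin.val_castSucc]
    omega
  rw [hsplit, sum_insert (by simp), add_comm]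

namespace Matrix

variable {R : Type*} {m : ℕ}

def IsStrictUpperTriangular [Zero R] (P : Matrix (Fin m) (Fin m) R) : Prop :=
  ∀ i j : Fin m, (j : ℕ) ≤ (i : ℕ) → P i j = 0

namespace IsStrictUpperTriangular

section Semiring

variable [Semiring R] {P : Matrix (Fin m) (Fin m) R}

theorem pow_apply_eq_zero (hP : P.IsStrictUpperTriangular) (l : ℕ) {a b : Fin m}
    (h : (b : ℕ) < a + l) : (P ^ l) a b = 0 := by
  induction l generalizing a with
  | zero => exact one_apply_ne (by rintro rfl; omega)
  | succ l ih =>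
    rw [pow_succ', mul_apply]
    refine sum_eq_zero fun c _ => ?_
    rcases le_or_gt (c : ℕ) a with hc | hc
    · rw [hP a c hc, zero_mul]
    · rw [ih (by omega), mul_zero]

theorem pow_eq_zero (hP : P.IsStrictUpperTriangular) : P ^ m = 0 := by
  ext a b
  exact hP.pow_apply_eq_zero m (by omega)

theorem sum_range_succ_pow_apply (hP : P.IsStrictUpperTriangular) (a b : Fin m) :
    ∑ l ∈ range ((b : ℕ) + 1), (P ^ l) a b = (∑ l ∈ range m, P ^ l) a b := by
  rw [sum_apply]
  refine sum_subset (range_subset_range.2 b.isLt) fun l _ hl => hP.pow_apply_eq_zero l ?_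
  rw [mem_range] at hl
  omega

theorem sum_range_pow_apply_self (hP : P.IsStrictUpperTriangular) (a : Fin m) :
    (∑ l ∈ range m, P ^ l) a a = 1 := by
  rw [← hP.sum_range_succ_pow_apply, sum_eq_single 0 (fun l _ hl => hP.pow_apply_eq_zero l
    (by omega)) (by simp)]
  simp

theorem sum_filter_le_mul_apply (hP : P.IsStrictUpperTriangular) (X : Matrix (Fin m) (Fin m) R)
    (a : Fin m) {i i' : Fin m} (hi' : (i' : ℕ) = i + 1) :
    ∑ l ∈ univ.filter (fun l : Fin m => (l : ℕ) ≤ i), X a l * P l i' = (X * P) a i' := by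
  rw [mul_apply]
  refine sum_subset (filter_subset _ _) fun l _ hl => ?_
  rw [hP l i' (by simp at hl; omega), mul_zero]

end Semiring

variable [Ring R] {P : Matrix (Fin m) (Fin m) R}

theorem sum_range_pow_eq_one_add_mul (hP : P.IsStrictUpperTriangular) :
    ∑ l ∈ range m, P ^ l = 1 + (∑ l ∈ range m, P ^ l) * P := by
  have h := geom_sum_mul_neg P m
  rw [hP.pow_eq_zero, sub_zero, mul_sub, mul_one] at h
  rw [← h, sub_add_cancel]

theorem sum_range_pow_apply_of_ne (hP : P.IsStrictUpperTriangular) {a b : Fin m} (hab : a ≠ b) :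
    (∑ l ∈ range m, P ^ l) a b = ((∑ l ∈ range m, P ^ l) * P) a b := by
  conv_lhs => rw [hP.sum_range_pow_eq_one_add_mul]
  rw [add_apply, one_apply_ne hab, zero_add]

end IsStrictUpperTriangular

end Matrix

open Matrix

theorem stmt9_general (n : ℕ) (P : Matrix (Fin (n + 1)) (Fin (n + 1)) ℝ)
    (hP : ∀ i j : Fin (n + 1), (j : ℕ) ≤ (i : ℕ) → P i j = 0)
    (Q : Fin (n + 1) → Fin (n + 1) → ℝ)
    (hQbase : ∀ j : Fin (n + 1), 0 < (j : ℕ) → Q 0 j = P 0 j)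
    (hQrec : ∀ i i' j : Fin (n + 1), (i' : ℕ) = (i : ℕ) + 1 → (i' : ℕ) < (j : ℕ) →
      Q i' j = Q i j + Q i i' * P i' j) :
    ∀ i j : Fin (n + 1), (i : ℕ) < (j : ℕ) →
      Q i j = ∑ l₁ ∈ Finset.univ.filter (fun l : Fin (n + 1) => (l : ℕ) ≤ (i : ℕ)),
        (∑ l ∈ Finset.range ((l₁ : ℕ) + 1), (P ^ l) 0 l₁) * P l₁ j := by
  have hU : P.IsStrictUpperTriangular := hP
  simp_rw [hU.sum_range_succ_pow_apply 0]
  intro i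
  induction i using Fin.induction with
  | zero =>
    intro j hj
    have hzero : univ.filter (fun l : Fin (n + 1) => (l : ℕ) ≤ (0 : Fin (n + 1))) = {0} := by
      ext l
      simp only [mem_filter, mem_univ, true_and, mem_singleton, Fin.ext_iff, Fin.val_zero,
        Nat.le_zero]
    rw [hQbase j hj, hzero, sum_singleton, hU.sum_range_pow_apply_self, one_mul]
  | succ i ih =>
    intro j hj
    rw [hQrec i.castSucc i.succ j (by simp) hj, ih j (by simp at hj ⊢; omega),
      ih i.succ (by simp), hU.sum_filter_le_mul_apply _ 0 (i' := i.succ) (by simp),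
      ← hU.sum_range_pow_apply_of_ne (Fin.succ_ne_zero i).symm, Fin.sum_filter_val_le_succ]

/-- Equivalence of the recursive formula and the matrix-power formula for the
probabilities `Q̄_{i,j}` that the strictly increasing chain with one-step matrix `P`,
started at `0`, jumps in one step from the set `{0,…,i}` into the state `j`. -/
theorem stmt9 (n : ℕ) (hn : 1 ≤ n) (P : Matrix (Fin (n + 1)) (Fin (n + 1)) ℝ)
    (hP : ∀ i j : Fin (n + 1), (j : ℕ) ≤ (i : ℕ) → P i j = 0)
    (Q : Fin (n + 1) → Fin (n + 1) → ℝ)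
    (hQbase : ∀ j : Fin (n + 1), 0 < (j : ℕ) → Q 0 j = P 0 j)
    (hQzero : ∀ i j : Fin (n + 1), (j : ℕ) ≤ (i : ℕ) → Q i j = 0)
    (hQrec : ∀ i i' j : Fin (n + 1), (i' : ℕ) = (i : ℕ) + 1 → (i' : ℕ) < (j : ℕ) →
      Q i' j = Q i j + Q i i' * P i' j) :
    ∀ i j : Fin (n + 1), (i : ℕ) < (j : ℕ) →
      Q i j = ∑ l₁ ∈ Finset.univ.filter (fun l : Fin (n + 1) => (l : ℕ) ≤ (i : ℕ)),
        (∑ l ∈ Finset.range ((l₁ : ℕ) + 1), (P ^ l) 0 l₁) * P l₁ j :=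
  stmt9_general n P hP Q hQbase hQrec
end

section
/- Let Φ be a semi-coherent structure function on n ≥ 1 components with structural signature s, and let T_1,…,T_n be i.i.d. exponential random variables with rate μ > 0. Let T_fail := inf{ t ≥ 0 : Φ(1{T_1 > t},…,1{T_n > t}) = 0 } be the system failure time and T_{1:n} ≤ … ≤ T_{n:n} the order statistics of T_1,…,T_n. Then for all real t, t_1, …, t_n: P( T_fail > t, T_{1:n} > t_1, …, T_{n:n} > t_n ) = Σ_{k=1}^{n} s_k · P( T_{k:n} > t, T_{1:n} > t_1, …, T_{n:n} > t_n ). In particular P(T_fail > t) = Σ_{k=1}^{n} s_k P(T_{k:n} > t) for all t (the Samaniego decomposition). -/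
/-!
For `t ≥ 0` the system survives past `t` iff `Φ` is `true` at the state vector at time `t`, and
`T_{k+1:n} > t` iff at most `k` components have failed by time `t`; for `t < 0` both events hold
almost surely, the lifetimes being positive. I.i.d. lifetimes have an exchangeable law, and the
event `T_{1:n} > t_1, …, T_{n:n} > t_n` is permutation invariant, so the probability `w x` that
the state vector at time `t` equals `x` (jointly with that event) depends only on the number of
failed components of `x`. Hence `∑_{Φ x} w x = ∑_x S̄_{#failed(x)} w x`, and the telescoping
`S̄_j = ∑_{k ≥ j} s_{k+1}` (using `S̄_n = 0`) rearranges this into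
`∑_k s_{k+1} P(T_{k+1:n} > t, …)`.
-/

open MeasureTheory ProbabilityTheory

/-- The `k`-th order statistic (`k : Fin n`, 0-based) of a tuple `x : Fin n → ℝ`. -/
noncomputable def orderStat (n : ℕ) (x : Fin n → ℝ) (k : Fin n) : ℝ :=
  x (Tuple.sort x k)

/-- The system failure time: the first nonnegative time at which the structure
function evaluated at the vector of component states (component `i` works at time `t`
iff `t < x i`) is `0`. -/
noncomputable def failTime (n : ℕ) (Φ : (Fin n → Bool) → Bool) (x : Fin n → ℝ) : ℝ :=
  sInf {t : ℝ | 0 ≤ t ∧ Φ (fun i => decide (t < x i)) = false}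

open Finset Topology

section Combinatorics

variable {ι : Type*} [Fintype ι]

def numFailed (x : ι → Bool) : ℕ := #{i | x i = false}

lemma numFailed_le (x : ι → Bool) : numFailed x ≤ Fintype.card ι :=
  card_filter_le _ _

lemma numFailed_comp_perm (x : ι → Bool) (σ : Equiv.Perm ι) :
    numFailed (x ∘ σ) = numFailed x := by
  simp only [numFailed, card_filter]
  exact Equiv.sum_comp σ fun i => if x i = false then 1 else 0

lemma card_subtype_eq_true (x : ι → Bool) :
    Fintype.card {i // x i = true} = Fintype.card ι - numFailed x := by
  rw [numFailed, ← Fintype.card_subtype, ← Fintype.card_subtype_compl]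
  exact Fintype.card_congr (Equiv.subtypeEquivRight fun i => by simp)

lemma exists_perm_comp_eq {x x' : ι → Bool} (h : numFailed x = numFailed x') :
    ∃ σ : Equiv.Perm ι, x ∘ σ = x' := by
  have hcard : ∀ c, Fintype.card {i // x' i = c} = Fintype.card {i // x i = c}
    | false => by rw [Fintype.card_subtype, Fintype.card_subtype]; exact h.symm
    | true => by rw [card_subtype_eq_true, card_subtype_eq_true, h]
  exact ⟨.ofFiberEquiv fun c => Fintype.equivOfCardEq (hcard c),
    funext (Equiv.ofFiberEquiv_map _)⟩

lemma card_numFailed_eq [DecidableEq ι] (k : ℕ) :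
    #{x : ι → Bool | numFailed x = k} = (Fintype.card ι).choose k := by
  rw [← card_univ, ← card_powersetCard]
  refine card_nbij' (fun x => univ.filter (x · = false)) (fun D i => decide (i ∉ D))
    (fun x hx => ?_) (fun D hD => ?_) (fun x _ => ?_) (fun D _ => ?_)
  · simp only [coe_filter, Set.mem_ofPred_eq, mem_univ, true_and] at hx
    simp only [mem_coe, mem_powersetCard, subset_univ, true_and]
    exact hx
  · simp only [mem_coe, mem_powersetCard, subset_univ, true_and] at hD
    rw [mem_coe, mem_filter]
    refine ⟨mem_univ _, ?_⟩
    simpa [numFailed] using hD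
  · funext i
    cases h : x i <;> simp [h]
  · ext i
    simp

end Combinatorics

section Signature

variable {n : ℕ} {Φ : (Fin n → Bool) → Bool}

lemma Sbar_eq (k : ℕ) : Sbar n Φ k = #{x | numFailed x = k ∧ Φ x = true} / n.choose k := rfl

lemma Sbar_self (hΦ0 : Φ (fun _ => false) = false) : Sbar n Φ n = 0 := by
  have hempty : ({x | numFailed x = n ∧ Φ x = true} : Finset (Fin n → Bool)) = ∅ := by
    refine filter_false_of_mem fun x _ ⟨hx, hΦ⟩ => ?_
    have hdown : ∀ i, x i = false := by
      simpa [numFailed, filter_eq_self] using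
        (card_eq_iff_eq_univ _).1 (hx.trans (Fintype.card_fin n).symm)
    simp [funext hdown, hΦ0] at hΦ
  simp [Sbar_eq, hempty]

lemma sum_structSig_of_le (hΦ0 : Φ (fun _ => false) = false) {j : ℕ} (hj : j ≤ n) :
    ∑ k : Fin n with j ≤ k.val, structSig n Φ (k + 1) = Sbar n Φ j := by
  rw [sum_filter,
    Fin.sum_univ_eq_sum_range (fun k => if j ≤ k then structSig n Φ (k + 1) else 0),
    ← sum_filter, range_eq_Ico, Ico_filter_le_of_left_le (Nat.zero_le j),
    ← sub_zero (Sbar n Φ j), ← Sbar_self hΦ0, ← neg_sub, ← sum_Ico_sub _ hj,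
    ← sum_neg_distrib]
  simp [structSig]

lemma sum_structSig_mul_sum (hΦ0 : Φ (fun _ => false) = false) (w : (Fin n → Bool) → ℝ) :
    ∑ k : Fin n, structSig n Φ (k + 1) * ∑ x with numFailed x ≤ k.val, w x =
      ∑ x, Sbar n Φ (numFailed x) * w x := calc
  _ = ∑ k : Fin n, ∑ x with numFailed x ≤ k.val, structSig n Φ (k + 1) * w x := by
    simp_rw [mul_sum]
  _ = ∑ x, ∑ k : Fin n with numFailed x ≤ k.val, structSig n Φ (k + 1) * w x :=
    sum_comm' fun _ _ => by simp
  _ = ∑ x, Sbar n Φ (numFailed x) * w x := by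
    simp_rw [← sum_mul, sum_structSig_of_le hΦ0 ((numFailed_le _).trans_eq (Fintype.card_fin n))]

lemma sum_Sbar_mul {w : (Fin n → Bool) → ℝ}
    (hw : ∀ (σ : Equiv.Perm (Fin n)) x, w (x ∘ σ) = w x) :
    ∑ x, Sbar n Φ (numFailed x) * w x = ∑ x with Φ x = true, w x := by
  have hmaps : ∀ x ∈ (univ : Finset (Fin n → Bool)), numFailed x ∈ range (n + 1) :=
    fun x _ => mem_range_succ_iff.2 ((numFailed_le x).trans_eq (Fintype.card_fin n))
  rw [← sum_fiberwise_of_maps_to hmaps, sum_filter, ← sum_fiberwise_of_maps_to hmaps]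
  refine sum_congr rfl fun j _ => ?_
  rcases (univ.filter fun x : Fin n → Bool => numFailed x = j).eq_empty_or_nonempty
    with hj | ⟨x₀, hx₀⟩
  · rw [hj, sum_empty, sum_empty]
  replace hx₀ : numFailed x₀ = j := (mem_filter.1 hx₀).2
  have hw₀ : ∀ x ∈ univ.filter fun x => numFailed x = j, w x = w x₀ := fun x hx => by
    obtain ⟨σ, rfl⟩ := exists_perm_comp_eq (hx₀.trans (mem_filter.1 hx).2.symm)
    exact hw σ x₀
  have hchoose : (n.choose j : ℝ) ≠ 0 := Nat.cast_ne_zero.2 (Nat.choose_pos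
    (hx₀ ▸ (numFailed_le x₀).trans_eq (Fintype.card_fin n))).ne'
  calc ∑ x with numFailed x = j, Sbar n Φ (numFailed x) * w x
      = ∑ x with numFailed x = j, Sbar n Φ j * w x₀ :=
        sum_congr rfl fun x hx => by rw [(mem_filter.1 hx).2, hw₀ x hx]
    _ = #{x | numFailed x = j ∧ Φ x = true} * w x₀ := by
        rw [sum_const, card_numFailed_eq, Fintype.card_fin, nsmul_eq_mul, Sbar_eq]
        field_simp
    _ = ∑ x with numFailed x = j, if Φ x = true then w x else 0 := by
        rw [← sum_filter, filter_filter, sum_congr rfl fun x hx => hw₀ x ?_, sum_const,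
          nsmul_eq_mul]
        exact mem_filter.2 ⟨mem_univ x, (mem_filter.1 hx).2.1⟩

theorem sum_filter_eq_sum_structSig_mul (hΦ0 : Φ (fun _ => false) = false)
    {w : (Fin n → Bool) → ℝ} (hw : ∀ (σ : Equiv.Perm (Fin n)) x, w (x ∘ σ) = w x) :
    ∑ x with Φ x = true, w x =
      ∑ k : Fin n, structSig n Φ (k + 1) * ∑ x with numFailed x ≤ k.val, w x := by
  rw [sum_structSig_mul_sum hΦ0, sum_Sbar_mul hw]

end Signature

section Lifetimes

variable {ι : Type*}

noncomputable def aliveAt (t : ℝ) (y : ι → ℝ) : ι → Bool := fun i => decide (t < y i)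

lemma aliveAt_comp {κ : Type*} (t : ℝ) (y : ι → ℝ) (σ : κ → ι) :
    aliveAt t (y ∘ σ) = aliveAt t y ∘ σ := rfl

lemma measurable_aliveAt [Countable ι] (t : ℝ) : Measurable (aliveAt (ι := ι) t) := by
  refine measurable_pi_lambda (aliveAt t) fun i => measurable_to_countable' fun b => ?_
  have hi : Measurable fun y : ι → ℝ => y i := measurable_pi_apply i
  cases b
  · convert measurableSet_le hi (measurable_const (a := t)) using 1
    ext; simp [aliveAt]
  · convert measurableSet_lt (measurable_const (a := t)) hi using 1
    ext; simp [aliveAt]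

lemma numFailed_aliveAt [Fintype ι] (t : ℝ) (y : ι → ℝ) :
    numFailed (aliveAt t y) = #{i | y i ≤ t} := by
  simp [numFailed, aliveAt]

end Lifetimes

section OrderStatistics

variable {n : ℕ}

lemma numFailed_aliveAt_le_iff {g : Fin n → ℝ} (hg : Monotone g) (t : ℝ) (k : Fin n) :
    numFailed (aliveAt t g) ≤ k ↔ t < g k := by
  rw [numFailed_aliveAt]
  constructor
  · intro h
    by_contra! hk
    have : Iic k ⊆ ({i | g i ≤ t} : Finset (Fin n)) := fun i hi =>
      mem_filter.2 ⟨mem_univ i, (hg (mem_Iic.1 hi)).trans hk⟩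
    have := (card_le_card this).trans h
    simp at this
  · intro h
    calc #{i | g i ≤ t} ≤ #(Iio k) := card_le_card fun i hi =>
          mem_Iio.2 (lt_of_not_ge fun hki => (h.trans_le (hg hki)).not_ge (mem_filter.1 hi).2)
      _ = k := Fin.card_Iio k

lemma lt_orderStat_iff (t : ℝ) (y : Fin n → ℝ) (k : Fin n) :
    t < orderStat n y k ↔ numFailed (aliveAt t y) ≤ k := by
  rw [← numFailed_comp_perm _ (Tuple.sort y), ← aliveAt_comp,
    numFailed_aliveAt_le_iff (Tuple.monotone_sort y)]
  rfl

lemma orderStat_comp_perm (y : Fin n → ℝ) (σ : Equiv.Perm (Fin n)) :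
    orderStat n (y ∘ σ) = orderStat n y :=
  funext fun k => eq_of_forall_lt_iff fun t => by
    rw [lt_orderStat_iff, lt_orderStat_iff, aliveAt_comp, numFailed_comp_perm]

lemma setOf_lt_orderStat (t : ℝ) (k : Fin n) :
    {y | t < orderStat n y k} = aliveAt t ⁻¹' {x | numFailed x ≤ k} :=
  Set.ext fun y => lt_orderStat_iff t y k

lemma measurableSet_lt_orderStat (t : ℝ) (k : Fin n) :
    MeasurableSet {y | t < orderStat n y k} := by
  rw [setOf_lt_orderStat]
  exact measurable_aliveAt t .of_discrete

end OrderStatistics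

section FailureTime

variable {n : ℕ} {Φ : (Fin n → Bool) → Bool}

lemma failTime_nonneg (y : Fin n → ℝ) : 0 ≤ failTime n Φ y :=
  Real.sInf_nonneg fun _ hs => hs.1

lemma lt_failTime_iff (hmono : ∀ x y : Fin n → Bool, (∀ i, x i ≤ y i) → Φ x ≤ Φ y)
    (hΦ0 : Φ (fun _ => false) = false) {t : ℝ} (ht : 0 ≤ t) (y : Fin n → ℝ) :
    t < failTime n Φ y ↔ Φ (aliveAt t y) = true := by
  set S := {s : ℝ | 0 ≤ s ∧ Φ (aliveAt s y) = false}
  have hfail : failTime n Φ y = sInf S := rfl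
  have hS : S.Nonempty := by
    have hdead : aliveAt (∑ i, |y i|) y = fun _ => false := funext fun i => decide_eq_false
      (single_le_sum (fun j _ => abs_nonneg (y j)) (mem_univ i) |>.trans' (le_abs_self _)).not_gt
    exact ⟨∑ i, |y i|, by positivity, by rw [hdead, hΦ0]⟩
  rw [hfail]
  constructor
  · intro h
    by_contra hΦt
    exact h.not_ge (csInf_le ⟨0, fun _ hs => hs.1⟩ ⟨ht, by simpa using hΦt⟩)
  · intro hΦt
    -- the components alive at `t` remain alive a little longer
    have hnear : ∀ᶠ s in 𝓝 t, ∀ i, t < y i → s < y i :=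
      Filter.eventually_all.2 fun i => by
        by_cases hi : t < y i
        · exact (eventually_lt_nhds hi).mono fun _ hs _ => hs
        · exact .of_forall fun _ h => absurd h hi
    obtain ⟨m, hm, htm⟩ : ∃ m, (∀ i, t < y i → m < y i) ∧ t < m :=
      ((hnear.filter_mono nhdsWithin_le_nhds).and
        (self_mem_nhdsWithin : Set.Ioi t ∈ 𝓝[>] t)).exists
    refine htm.trans_le (le_csInf hS fun s hs => ?_)
    by_contra! hsm
    have hle : ∀ i, aliveAt t y i ≤ aliveAt s y i := fun i => by
      by_cases hi : t < y i
      · simp [aliveAt, hi, hsm.trans (hm i hi)]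
      · simp [aliveAt, hi]
    have := hmono _ _ hle
    rw [hΦt, hs.2] at this
    exact absurd this (by decide)

lemma lt_failTime_iff_of_pos
    (hmono : ∀ x y : Fin n → Bool, (∀ i, x i ≤ y i) → Φ x ≤ Φ y)
    (hΦ0 : Φ (fun _ => false) = false) (hΦ1 : Φ (fun _ => true) = true) {y : Fin n → ℝ}
    (hy : ∀ i, 0 < y i) (t : ℝ) :
    t < failTime n Φ y ↔ Φ (aliveAt t y) = true := by
  rcases le_or_gt 0 t with ht | ht
  · exact lt_failTime_iff hmono hΦ0 ht y
  · have hall : aliveAt t y = fun _ => true := funext fun i => decide_eq_true (ht.trans (hy i))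
    simp [hall, hΦ1, ht.trans_le (failTime_nonneg y)]

end FailureTime

section Exchangeable

variable {n : ℕ} {Φ : (Fin n → Bool) → Bool}

theorem measureReal_aliveAt_inter_eq_sum {L : Measure (Fin n → ℝ)} [IsFiniteMeasure L]
    (hL : ∀ σ : Equiv.Perm (Fin n), MeasurePreserving (· ∘ ⇑σ) L L)
    (hΦ0 : Φ (fun _ => false) = false) {A : Set (Fin n → ℝ)} (hA : MeasurableSet A)
    (hAσ : ∀ (σ : Equiv.Perm (Fin n)) y, y ∘ ⇑σ ∈ A ↔ y ∈ A) (t : ℝ) :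
    L.real (aliveAt t ⁻¹' {x | Φ x = true} ∩ A) =
      ∑ k : Fin n, structSig n Φ (k + 1) *
        L.real (aliveAt t ⁻¹' {x | numFailed x ≤ k.val} ∩ A) := by
  set ν := (L.restrict A).map (aliveAt t)
  have hν : ∀ S, L.real (aliveAt t ⁻¹' S ∩ A) = ν.real S := fun S => by
    rw [map_measureReal_apply (measurable_aliveAt t) .of_discrete,
      measureReal_restrict_apply (measurable_aliveAt t .of_discrete)]
  have hsum : ∀ (p : (Fin n → Bool) → Prop) [DecidablePred p],
      ν.real {x | p x} = ∑ x with p x, ν.real {x} := fun p _ => by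
    rw [sum_measureReal_singleton, coe_filter]
    simp
  have hw : ∀ (σ : Equiv.Perm (Fin n)) x, ν.real {x ∘ σ} = ν.real {x} := fun σ x => by
    rw [← hν, ← hν, ← (hL σ).measureReal_preimage
      ((measurable_aliveAt t .of_discrete).inter hA).nullMeasurableSet]
    congr 1
    ext y
    simp [aliveAt_comp, hAσ, σ.surjective.injective_comp_right.eq_iff]
  simp_rw [hν, hsum]
  exact sum_filter_eq_sum_structSig_mul hΦ0 hw

theorem measureReal_lt_failTime_inter_eq_sum {Ω : Type*} [MeasurableSpace Ω] {P : Measure Ω}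
    [IsFiniteMeasure P] {Y : Ω → Fin n → ℝ} (hY : Measurable Y)
    (hexch : ∀ σ : Equiv.Perm (Fin n), MeasurePreserving (· ∘ ⇑σ) (P.map Y) (P.map Y))
    (hpos : ∀ᵐ ω ∂P, ∀ i, 0 < Y ω i)
    (hmono : ∀ x y : Fin n → Bool, (∀ i, x i ≤ y i) → Φ x ≤ Φ y)
    (hΦ0 : Φ (fun _ => false) = false) (hΦ1 : Φ (fun _ => true) = true)
    {A : Set (Fin n → ℝ)} (hA : MeasurableSet A)
    (hAσ : ∀ (σ : Equiv.Perm (Fin n)) y, y ∘ ⇑σ ∈ A ↔ y ∈ A) (t : ℝ) :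
    P.real {ω | t < failTime n Φ (Y ω) ∧ Y ω ∈ A} =
      ∑ k : Fin n, structSig n Φ (k + 1) *
        P.real {ω | t < orderStat n (Y ω) k ∧ Y ω ∈ A} := by
  have hfail : {ω | t < failTime n Φ (Y ω) ∧ Y ω ∈ A} =ᵐ[P]
      Y ⁻¹' (aliveAt t ⁻¹' {x | Φ x = true} ∩ A) :=
    Filter.eventuallyEq_set.2 <| hpos.mono fun ω hω => by
      simp [lt_failTime_iff_of_pos hmono hΦ0 hΦ1 hω]
  have horder : ∀ k : Fin n, {ω | t < orderStat n (Y ω) k ∧ Y ω ∈ A} =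
      Y ⁻¹' (aliveAt t ⁻¹' {x | numFailed x ≤ k.val} ∩ A) := fun k =>
    Set.ext fun ω => and_congr_left' (lt_orderStat_iff t (Y ω) k)
  have hmeas : ∀ S, MeasurableSet (aliveAt t ⁻¹' S ∩ A) := fun S =>
    (measurable_aliveAt t .of_discrete).inter hA
  simp_rw [measureReal_congr hfail, horder, ← map_measureReal_apply hY (hmeas _)]
  exact measureReal_aliveAt_inter_eq_sum hexch hΦ0 hA hAσ t

end Exchangeable

section IIDExponential

lemma measurePreserving_comp_perm_pi {ι α : Type*} [Fintype ι] [MeasurableSpace α]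
    {ν : ι → Measure α} [∀ i, SigmaFinite (ν i)] (hν : ∀ i j, ν i = ν j)
    (σ : Equiv.Perm ι) :
    MeasurePreserving (fun y : ι → α => y ∘ σ) (Measure.pi ν) (Measure.pi ν) := by
  have h := measurePreserving_piCongrLeft ν σ.symm
  rw [show (fun i => ν (σ.symm i)) = ν from funext fun i => hν _ i] at h
  convert h using 1
  ext y i
  simp [MeasurableEquiv.coe_piCongrLeft, Equiv.piCongrLeft_apply_eq_cast]

variable {Ω : Type*} [MeasurableSpace Ω] {P : Measure Ω} [IsProbabilityMeasure P] {μ : ℝ}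
  {X : Ω → ℝ}

lemma ae_pos_of_exp (hX : Measurable X)
    (hexp : ∀ t, 0 ≤ t → P {ω | t < X ω} = ENNReal.ofReal (Real.exp (-μ * t))) :
    ∀ᵐ ω ∂P, 0 < X ω :=
  (ae_iff_measure_eq (measurableSet_lt measurable_const hX).nullMeasurableSet).2 (by simp [hexp])

lemma map_apply_Ioi_of_exp (hX : Measurable X)
    (hexp : ∀ t, 0 ≤ t → P {ω | t < X ω} = ENNReal.ofReal (Real.exp (-μ * t))) (a : ℝ) :
    P.map X (Set.Ioi a) = ENNReal.ofReal (Real.exp (-μ * max a 0)) := by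
  rw [Measure.map_apply hX measurableSet_Ioi, ← hexp _ (le_max_right a 0)]
  refine measure_congr (Filter.eventuallyEq_set.2 ((ae_pos_of_exp hX hexp).mono fun ω hω => ?_))
  simp [hω]

lemma map_eq_map_of_exp {X' : Ω → ℝ} (hX : Measurable X) (hX' : Measurable X')
    (hexp : ∀ t, 0 ≤ t → P {ω | t < X ω} = ENNReal.ofReal (Real.exp (-μ * t)))
    (hexp' : ∀ t, 0 ≤ t → P {ω | t < X' ω} = ENNReal.ofReal (Real.exp (-μ * t))) :
    P.map X = P.map X' := by
  have := Measure.isProbabilityMeasure_map (μ := P) hX.aemeasurable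
  have := Measure.isProbabilityMeasure_map (μ := P) hX'.aemeasurable
  refine ext_of_generate_finite _ (borel_eq_generateFrom_Ioi ℝ) isPiSystem_Ioi ?_ (by simp)
  rintro _ ⟨a, rfl⟩
  rw [map_apply_Ioi_of_exp hX hexp, map_apply_Ioi_of_exp hX' hexp']

end IIDExponential

theorem stmt12_general {Ω : Type*} [MeasurableSpace Ω] (Pr : Measure Ω) [IsProbabilityMeasure Pr]
    (n : ℕ) (Φ : (Fin n → Bool) → Bool)
    (hmono : ∀ x y : Fin n → Bool, (∀ i, x i ≤ y i) → Φ x ≤ Φ y)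
    (hΦ0 : Φ (fun _ => false) = false) (hΦ1 : Φ (fun _ => true) = true)
    (μ : ℝ)
    (T : Fin n → Ω → ℝ)
    (hmeas : ∀ i, Measurable (T i))
    (hindep : iIndepFun T Pr)
    (hexp : ∀ (i : Fin n) (t : ℝ), 0 ≤ t →
      Pr {ω | t < T i ω} = ENNReal.ofReal (Real.exp (-μ * t))) :
    (∀ (t : ℝ) (tv : Fin n → ℝ),
      (Pr {ω | t < failTime n Φ (fun i => T i ω) ∧
          ∀ j : Fin n, tv j < orderStat n (fun i => T i ω) j}).toReal =
        ∑ k : Fin n, structSig n Φ ((k : ℕ) + 1) *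
          (Pr {ω | t < orderStat n (fun i => T i ω) k ∧
            ∀ j : Fin n, tv j < orderStat n (fun i => T i ω) j}).toReal) ∧
    (∀ t : ℝ,
      (Pr {ω | t < failTime n Φ (fun i => T i ω)}).toReal =
        ∑ k : Fin n, structSig n Φ ((k : ℕ) + 1) *
          (Pr {ω | t < orderStat n (fun i => T i ω) k}).toReal) := by
  have hY : Measurable fun ω i => T i ω := measurable_pi_lambda _ hmeas
  have hexch : ∀ σ : Equiv.Perm (Fin n), MeasurePreserving (· ∘ ⇑σ)
      (Pr.map fun ω i => T i ω) (Pr.map fun ω i => T i ω) := by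
    rw [(iIndepFun_iff_map_fun_eq_pi_map fun i => (hmeas i).aemeasurable).1 hindep]
    exact measurePreserving_comp_perm_pi fun i j =>
      map_eq_map_of_exp (hmeas i) (hmeas j) (hexp i) (hexp j)
  have hpos : ∀ᵐ ω ∂Pr, ∀ i, 0 < T i ω :=
    ae_all_iff.2 fun i => ae_pos_of_exp (hmeas i) (hexp i)
  refine ⟨fun t tv => ?_, fun t => ?_⟩
  · refine measureReal_lt_failTime_inter_eq_sum hY hexch hpos hmono hΦ0 hΦ1
      (A := {y | ∀ j, tv j < orderStat n y j}) ?_ ?_ t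
    · rw [Set.ofPred_forall]
      exact .iInter fun j => measurableSet_lt_orderStat (tv j) j
    · simp [orderStat_comp_perm]
  · simpa [measureReal_def] using measureReal_lt_failTime_inter_eq_sum hY hexch hpos hmono
      hΦ0 hΦ1 .univ (fun _ _ => Iff.rfl) t

/-- Samaniego decomposition for semi-coherent systems with i.i.d. exponential
component lifetimes, jointly with the order statistics:
`P(T_fail > t, T_{1:n} > t_1, …, T_{n:n} > t_n)
  = Σ_k s_k P(T_{k:n} > t, T_{1:n} > t_1, …, T_{n:n} > t_n)`;
in particular `P(T_fail > t) = Σ_k s_k P(T_{k:n} > t)`. -/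
theorem stmt12 {Ω : Type*} [MeasurableSpace Ω] (Pr : Measure Ω) [IsProbabilityMeasure Pr]
    (n : ℕ) (hn : 1 ≤ n) (Φ : (Fin n → Bool) → Bool)
    (hmono : ∀ x y : Fin n → Bool, (∀ i, x i ≤ y i) → Φ x ≤ Φ y)
    (hΦ0 : Φ (fun _ => false) = false) (hΦ1 : Φ (fun _ => true) = true)
    (μ : ℝ) (hμ : 0 < μ)
    (T : Fin n → Ω → ℝ)
    (hmeas : ∀ i, Measurable (T i))
    (hindep : iIndepFun T Pr)
    (hexp : ∀ (i : Fin n) (t : ℝ), 0 ≤ t →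
      Pr {ω | t < T i ω} = ENNReal.ofReal (Real.exp (-μ * t))) :
    (∀ (t : ℝ) (tv : Fin n → ℝ),
      (Pr {ω | t < failTime n Φ (fun i => T i ω) ∧
          ∀ j : Fin n, tv j < orderStat n (fun i => T i ω) j}).toReal =
        ∑ k : Fin n, structSig n Φ ((k : ℕ) + 1) *
          (Pr {ω | t < orderStat n (fun i => T i ω) k ∧
            ∀ j : Fin n, tv j < orderStat n (fun i => T i ω) j}).toReal) ∧
    (∀ t : ℝ,
      (Pr {ω | t < failTime n Φ (fun i => T i ω)}).toReal =
        ∑ k : Fin n, structSig n Φ ((k : ℕ) + 1) *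
          (Pr {ω | t < orderStat n (fun i => T i ω) k}).toReal) :=
  stmt12_general Pr n Φ hmono hΦ0 hΦ1 μ T hmeas hindep hexp
end

section
/- Let Φ be a semi-coherent structure function on n ≥ 1 components with structural signature s, let T_1,…,T_n be i.i.d. exponential random variables with rate μ > 0, let T_fail := inf{ t ≥ 0 : Φ(1{T_1 > t},…,1{T_n > t}) = 0 }, and let T_{r:n} be the r-th order statistic of T_1,…,T_n. Then for every r ∈ {1,…,n}, P( T_fail ≤ T_{r:n} ) = Σ_{k=1}^{r} s_k. Equivalently, under the r-out-of-n:R repair policy whose first repair time is T_rep := min{T_fail, T_{r:n}}, the probability p^{(r)} that the first repair is due to a system failure equals Σ_{k=1}^{r} s_k. -/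
open MeasureTheory ProbabilityTheory

open Finset Function
open scoped ENNReal

/-!
Almost surely the lifetimes are distinct and nonnegative. Then at time `T_{r:n}` exactly the
set `A` of the `r` components that fail first is down, and, `Φ` being monotone, the system has
failed by then iff `Φ` vanishes on the state in which exactly `A` is down, i.e. iff `A` is a cut
set. For i.i.d. lifetimes without atoms every `r`-set is equally likely to be `A`, by
exchangeability, so the probability is `#{cut sets of size r} / C(n, r) = 1 - S̄_r`, and
`S̄_0 - S̄_r` telescopes to `∑_{k ≤ r} s_k`.
-/

section LowerBlock

variable {ι : Type*}

def lowerBlock (A : Finset ι) : Set (ι → ℝ) := {y | ∀ i ∈ A, ∀ j ∉ A, y i < y j}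

theorem eq_of_mem_lowerBlock {A B : Finset ι} {y : ι → ℝ} (hA : y ∈ lowerBlock A)
    (hB : y ∈ lowerBlock B) (hAB : #A = #B) : A = B := by
  by_contra hne
  obtain ⟨i, hiA, hiB⟩ : ∃ i ∈ A, i ∉ B := by
    by_contra! h
    exact hne (eq_of_subset_of_card_le h hAB.ge)
  obtain ⟨j, hjB, hjA⟩ : ∃ j ∈ B, j ∉ A := by
    by_contra! h
    exact hne (eq_of_subset_of_card_le h hAB.le).symm
  exact (hA i hiA j hjA).asymm (hB j hjB i hiB)

theorem pairwiseDisjoint_lowerBlock (𝒜 : Finset (Finset ι)) {r : ℕ}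
    (h𝒜 : ∀ A ∈ 𝒜, #A = r) :
    (𝒜 : Set (Finset ι)).PairwiseDisjoint lowerBlock :=
  fun A hA B hB hAB => Set.disjoint_left.2 fun _ hyA hyB =>
    hAB (eq_of_mem_lowerBlock hyA hyB ((h𝒜 A hA).trans (h𝒜 B hB).symm))

theorem mem_biUnion_lowerBlock_iff {𝒜 : Finset (Finset ι)} {B : Finset ι} {y : ι → ℝ}
    (hy : y ∈ lowerBlock B) (h𝒜 : ∀ A ∈ 𝒜, #A = #B) :
    y ∈ ⋃ A ∈ 𝒜, lowerBlock A ↔ B ∈ 𝒜 := by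
  simp only [Set.mem_iUnion, exists_prop]
  exact ⟨fun ⟨A, hA, hyA⟩ => eq_of_mem_lowerBlock hyA hy (h𝒜 A hA) ▸ hA,
    fun hB => ⟨B, hB, hy⟩⟩

theorem measurableSet_lowerBlock [Countable ι] (A : Finset ι) :
    MeasurableSet (lowerBlock A) := by
  simp only [lowerBlock, Set.ofPred_forall]
  exact .iInter fun i => .iInter fun _ => .iInter fun j => .iInter fun _ =>
    measurableSet_lt (measurable_pi_apply i) (measurable_pi_apply j)

theorem measurableSet_biUnion_lowerBlock [Countable ι] (𝒜 : Finset (Finset ι)) :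
    MeasurableSet (⋃ A ∈ 𝒜, lowerBlock A) :=
  .biUnion (countable_toSet 𝒜) fun A _ => measurableSet_lowerBlock A

theorem preimage_comp_lowerBlock (σ : Equiv.Perm ι) (A : Finset ι) :
    (fun y : ι → ℝ => y ∘ σ) ⁻¹' lowerBlock A = lowerBlock (A.map σ.toEmbedding) := by
  ext y
  simp only [lowerBlock, Set.mem_preimage, Set.mem_ofPred_eq, comp_apply, mem_map_equiv]
  constructor
  · intro h i hi j hj
    simpa using h _ hi _ hj
  · intro h i hi j hj
    exact h (σ i) (by simpa using hi) (σ j) (by simpa using hj)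

end LowerBlock

section OrderStat

variable {n : ℕ}

theorem mem_lowerBlock_filter_le_orderStat (y : Fin n → ℝ) (j : Fin n) :
    y ∈ lowerBlock {i | y i ≤ orderStat n y j} := by
  intro i hi k hk
  simp only [mem_filter, mem_univ, true_and, not_le] at hi hk
  exact hi.trans_lt hk

theorem card_filter_le_orderStat {y : Fin n → ℝ} (hy : Injective y) (j : Fin n) :
    #{i | y i ≤ orderStat n y j} = j + 1 := by
  have hsort : StrictMono (y ∘ Tuple.sort y) :=
    (Tuple.monotone_sort y).strictMono_of_injective (hy.comp (Tuple.sort y).injective)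
  have : ({i | y i ≤ orderStat n y j} : Finset (Fin n)) =
      (Iic j).map (Tuple.sort y).toEmbedding := by
    ext i
    obtain ⟨k, rfl⟩ := (Tuple.sort y).surjective i
    rw [mem_filter_univ, mem_map_equiv, Equiv.symm_apply_apply, mem_Iic]
    exact hsort.le_iff_le
  rw [this, card_map, Fin.card_Iic]

end OrderStat

section FailTime

variable {n : ℕ} {Φ : (Fin n → Bool) → Bool}

theorem exists_gt_forall_le_of_lt {ι : Type*} [Finite ι] (y : ι → ℝ) (v : ℝ) :
    ∃ b > v, ∀ i, v < y i → b ≤ y i := by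
  have : ∀ᶠ b in nhdsWithin v (Set.Ioi v), ∀ i, v < y i → b ≤ y i :=
    Filter.eventually_all.2 fun i => Filter.eventually_imp_distrib_left.2 fun h =>
      eventually_nhdsWithin_of_eventually_nhds (eventually_le_nhds h)
  obtain ⟨b, hb, hvb⟩ := (this.and self_mem_nhdsWithin).exists
  exact ⟨b, hvb, hb⟩

theorem failTime_le_iff (hmono : ∀ x y : Fin n → Bool, (∀ i, x i ≤ y i) → Φ x ≤ Φ y)
    (hΦ0 : Φ (fun _ => false) = false) (y : Fin n → ℝ) {v : ℝ} (hv : 0 ≤ v) :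
    failTime n Φ y ≤ v ↔ Φ (fun i => decide (v < y i)) = false := by
  refine ⟨fun h => ?_, fun h => csInf_le ⟨0, fun t ht => ht.1⟩ ⟨hv, h⟩⟩
  by_contra hworks
  obtain ⟨b, hvb, hb⟩ := exists_gt_forall_le_of_lt y v
  -- every component has failed by time `∑ i, |y i|`
  have hne : {t : ℝ | 0 ≤ t ∧ Φ (fun i => decide (t < y i)) = false}.Nonempty := by
    refine ⟨∑ i, |y i|, by positivity, ?_⟩
    convert hΦ0 using 3 with i
    simpa using (le_abs_self (y i)).trans
      (single_le_sum (fun k _ => abs_nonneg (y k)) (mem_univ i))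
  have : b ≤ failTime n Φ y := le_csInf hne fun t ⟨_, ht⟩ => by
    by_contra! htb
    refine hworks (Bool.eq_false_iff.2 fun hv' => ?_)
    have := hmono (fun i => decide (v < y i)) (fun i => decide (t < y i)) fun i => by
      by_cases hi : v < y i
      · simp [hi, htb.trans_le (hb i hi)]
      · simp [hi]
    rw [hv', ht] at this
    exact absurd this (by decide)
  linarith

end FailTime

section Signature

variable {n : ℕ} {Φ : (Fin n → Bool) → Bool}

def cutSetsOfCard (Φ : (Fin n → Bool) → Bool) (r : ℕ) : Finset (Finset (Fin n)) :=
  {A ∈ powersetCard r univ | Φ (fun i => decide (i ∉ A)) = false}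

theorem card_of_mem_cutSetsOfCard {r : ℕ} {A : Finset (Fin n)} (hA : A ∈ cutSetsOfCard Φ r) :
    #A = r :=
  (mem_powersetCard.1 (mem_filter.1 hA).1).2

theorem card_working_states_eq (r : ℕ) :
    #{x : Fin n → Bool | #{i | x i = false} = r ∧ Φ x = true} =
      #{A ∈ powersetCard r univ | Φ (fun i => decide (i ∉ A)) = true} := by
  refine card_nbij' (fun x => ({i | x i = false} : Finset (Fin n))) (fun A i => decide (i ∉ A))
    ?_ ?_ ?_ ?_
  · intro x hx
    have hx' : (fun i => decide (i ∉ ({i | x i = false} : Finset (Fin n)))) = x := by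
      ext i; simp
    simp_all
  · intro A hA
    simp_all
  · intro x _
    ext i; simp
  · intro A _
    ext i; simp

theorem Sbar_eq_card_div (r : ℕ) :
    Sbar n Φ r =
      #{A ∈ powersetCard r univ | Φ (fun i => decide (i ∉ A)) = true} / n.choose r := by
  rw [Sbar, card_working_states_eq]

theorem Sbar_zero (hΦ1 : Φ (fun _ => true) = true) : Sbar n Φ 0 = 1 := by
  simp [Sbar_eq_card_div, filter_singleton, hΦ1]

theorem sum_Icc_structSig (r : ℕ) :
    ∑ k ∈ Icc 1 r, structSig n Φ k = Sbar n Φ 0 - Sbar n Φ r := by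
  induction r with
  | zero => simp
  | succ r ih => rw [sum_Icc_succ_top (by omega), ih, structSig, Nat.add_sub_cancel]; ring

theorem card_cutSetsOfCard_div_choose (hΦ1 : Φ (fun _ => true) = true) {r : ℕ}
    (hrn : r ≤ n) :
    (#(cutSetsOfCard Φ r) : ℝ) / n.choose r = ∑ k ∈ Icc 1 r, structSig n Φ k := by
  have hsplit := card_filter_add_card_filter_not (s := powersetCard r (univ : Finset (Fin n)))
    (fun A => Φ (fun i => decide (i ∉ A)) = false)
  simp only [Bool.not_eq_false, card_powersetCard, card_univ, Fintype.card_fin] at hsplit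
  have hC : (n.choose r : ℝ) ≠ 0 := by exact_mod_cast (Nat.choose_pos hrn).ne'
  rw [sum_Icc_structSig, Sbar_zero hΦ1, Sbar_eq_card_div, cutSetsOfCard, eq_sub_iff_add_eq,
    ← add_div, div_eq_one_iff_eq hC]
  exact_mod_cast hsplit

end Signature

section IIDLifetimes

variable {ι : Type*} [Fintype ι] (ν : Measure ℝ) [IsProbabilityMeasure ν]

theorem measurePreserving_comp_perm (σ : Equiv.Perm ι) :
    MeasurePreserving (fun y : ι → ℝ => y ∘ σ) (Measure.pi fun _ => ν)
      (Measure.pi fun _ => ν) := by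
  convert measurePreserving_piCongrLeft (fun _ : ι => ν) σ.symm using 1
  ext y i
  simpa using (MeasurableEquiv.piCongrLeft_apply_apply (β := fun _ => ℝ) σ.symm y (σ i)).symm

theorem pi_lowerBlock_eq_of_card_eq {A B : Finset ι} (hAB : #A = #B) :
    Measure.pi (fun _ => ν) (lowerBlock A) = Measure.pi (fun _ => ν) (lowerBlock B) := by
  obtain ⟨σ, rfl⟩ := Equiv.Perm.exists_map_finset_eq A B hAB
  rw [← preimage_comp_lowerBlock, (measurePreserving_comp_perm ν σ).measure_preimage
    (measurableSet_lowerBlock A).nullMeasurableSet]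

theorem ae_injective_pi [NullSingletonClass ν] :
    ∀ᵐ y ∂Measure.pi (fun _ : ι => ν), Injective y := by
  have hne : ∀ i j, i ≠ j → ∀ᵐ y ∂Measure.pi (fun _ : ι => ν), y i ≠ y j := by
    intro i j hij
    have hind : IndepFun (fun y : ι → ℝ => y i) (fun y => y j) (Measure.pi fun _ => ν) :=
      (iIndepFun_pi (X := fun _ => id) fun _ => aemeasurable_id).indepFun hij
    have hlaw : (Measure.pi fun _ => ν).map (fun y : ι → ℝ => (y i, y j)) = ν.prod ν := by
      rw [(indepFun_iff_map_prod_eq_prod_map_map (measurable_pi_apply i).aemeasurable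
        (measurable_pi_apply j).aemeasurable).1 hind, (measurePreserving_eval _ i).map_eq,
        (measurePreserving_eval _ j).map_eq]
    have hoff : ∀ᵐ p ∂ν.prod ν, p ∈ (Set.diagonal ℝ)ᶜ :=
      (Measure.ae_prod_mem_iff_ae_ae_mem measurableSet_diagonal.compl).2 <|
        ae_of_all _ fun x => (ν.ae_ne x).mono fun _ h h' => h h'.symm
    rw [← hlaw] at hoff
    exact ae_of_ae_map ((measurable_pi_apply i).prodMk (measurable_pi_apply j)).aemeasurable hoff
  filter_upwards [ae_all_iff.2 fun i => ae_all_iff.2 fun j =>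
    Filter.eventually_imp_distrib_left.2 (hne i j)] with y hy i j
  exact not_imp_not.1 (hy i j)

variable {n : ℕ} [NullSingletonClass ν]

theorem pi_lowerBlock {A : Finset (Fin n)} (hA : A.Nonempty) :
    Measure.pi (fun _ => ν) (lowerBlock A) = (n.choose #A : ℝ≥0∞)⁻¹ := by
  set r := #A
  have hr : 0 < r := hA.card_pos
  have hrn : r ≤ n := by simpa using A.card_le_univ
  have hcard : ∀ B ∈ powersetCard r (univ : Finset (Fin n)), #B = r :=
    fun B hB => (mem_powersetCard.1 hB).2
  -- an injective `y` lies in the block of its `r` smallest coordinates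
  have hcover :
      Measure.pi (fun _ : Fin n => ν) (⋃ B ∈ powersetCard r univ, lowerBlock B) = 1 := by
    refine (prob_compl_eq_zero_iff (measurableSet_biUnion_lowerBlock _)).1 (ae_iff.1 ?_)
    filter_upwards [ae_injective_pi ν] with y hy
    refine Set.mem_iUnion₂.2 ⟨_, mem_powersetCard.2 ⟨subset_univ _, ?_⟩,
      mem_lowerBlock_filter_le_orderStat y ⟨r - 1, by omega⟩⟩
    rw [card_filter_le_orderStat hy]
    exact Nat.sub_add_cancel hr
  rw [measure_biUnion_finset (pairwiseDisjoint_lowerBlock _ hcard)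
      fun B _ => measurableSet_lowerBlock B,
    sum_congr rfl fun B hB => pi_lowerBlock_eq_of_card_eq ν (hcard B hB), sum_const,
    card_powersetCard, card_univ, Fintype.card_fin, nsmul_eq_mul] at hcover
  exact ENNReal.eq_inv_of_mul_eq_one_left (by rwa [mul_comm])

theorem pi_biUnion_lowerBlock {r : ℕ} (hr : 0 < r) {𝒜 : Finset (Finset (Fin n))}
    (hcard : ∀ A ∈ 𝒜, #A = r) :
    Measure.pi (fun _ => ν) (⋃ A ∈ 𝒜, lowerBlock A) =
      #𝒜 * (n.choose r : ℝ≥0∞)⁻¹ := by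
  rw [measure_biUnion_finset (pairwiseDisjoint_lowerBlock _ hcard)
    fun A _ => measurableSet_lowerBlock A, sum_congr rfl fun A hA => ?_, sum_const, nsmul_eq_mul]
  rw [pi_lowerBlock ν (card_pos.1 (hcard A hA ▸ hr)), hcard A hA]

end IIDLifetimes

section Lifetimes

variable {n : ℕ} {Φ : (Fin n → Bool) → Bool} {ν : Measure ℝ} [IsProbabilityMeasure ν]
  [NullSingletonClass ν]

theorem failTime_le_orderStat_ae_eq (hν : ∀ᵐ x ∂ν, 0 ≤ x)
    (hmono : ∀ x y : Fin n → Bool, (∀ i, x i ≤ y i) → Φ x ≤ Φ y)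
    (hΦ0 : Φ (fun _ => false) = false) (j : Fin n) :
    {y | failTime n Φ y ≤ orderStat n y j} =ᵐ[Measure.pi fun _ => ν]
      ⋃ A ∈ cutSetsOfCard Φ (j + 1), lowerBlock A := by
  have hnonneg : ∀ᵐ y ∂Measure.pi (fun _ : Fin n => ν), ∀ i, 0 ≤ y i :=
    ae_all_iff.2 fun i => (measurePreserving_eval _ i).quasiMeasurePreserving.ae hν
  refine Filter.eventuallyEq_set.2 ?_
  filter_upwards [ae_injective_pi ν, hnonneg] with y hy hy0
  set B : Finset (Fin n) := {i | y i ≤ orderStat n y j}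
  have hB : #B = j + 1 := card_filter_le_orderStat hy j
  have hstate : (fun i => decide (orderStat n y j < y i)) = fun i => decide (i ∉ B) := by
    ext i; simp [B]
  rw [failTime_le_iff hmono hΦ0 y (v := orderStat n y j) (hy0 _), hstate,
    mem_biUnion_lowerBlock_iff (mem_lowerBlock_filter_le_orderStat y j)
      fun A hA => hB ▸ card_of_mem_cutSetsOfCard hA,
    cutSetsOfCard, mem_filter, mem_powersetCard, hB]
  exact (and_iff_right ⟨subset_univ B, rfl⟩).symm

theorem nullMeasurableSet_failTime_le_orderStat (hν : ∀ᵐ x ∂ν, 0 ≤ x)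
    (hmono : ∀ x y : Fin n → Bool, (∀ i, x i ≤ y i) → Φ x ≤ Φ y)
    (hΦ0 : Φ (fun _ => false) = false) (j : Fin n) :
    NullMeasurableSet {y | failTime n Φ y ≤ orderStat n y j} (Measure.pi fun _ => ν) :=
  (measurableSet_biUnion_lowerBlock _).nullMeasurableSet.congr
    (failTime_le_orderStat_ae_eq hν hmono hΦ0 j).symm

theorem pi_failTime_le_orderStat (hν : ∀ᵐ x ∂ν, 0 ≤ x)
    (hmono : ∀ x y : Fin n → Bool, (∀ i, x i ≤ y i) → Φ x ≤ Φ y)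
    (hΦ0 : Φ (fun _ => false) = false) (hΦ1 : Φ (fun _ => true) = true) (j : Fin n) :
    (Measure.pi fun _ => ν).real {y | failTime n Φ y ≤ orderStat n y j} =
      ∑ k ∈ Icc 1 ((j : ℕ) + 1), structSig n Φ k := by
  rw [measureReal_def, measure_congr (failTime_le_orderStat_ae_eq hν hmono hΦ0 j),
    pi_biUnion_lowerBlock ν (Nat.succ_pos j) fun A => card_of_mem_cutSetsOfCard,
    ← card_cutSetsOfCard_div_choose hΦ1 j.is_lt, ENNReal.toReal_mul, ENNReal.toReal_inv]
  simp [div_eq_mul_inv]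

end Lifetimes

section Exponential

instance nullSingletonClass_expMeasure (r : ℝ) : NullSingletonClass (expMeasure r) := by
  unfold expMeasure gammaMeasure
  infer_instance

theorem expMeasure_Iic_zero {μ : ℝ} (hμ : 0 < μ) : expMeasure μ (Set.Iic 0) = 0 := by
  have := isProbabilityMeasure_expMeasure hμ
  rw [← ofReal_cdf, cdf_expMeasure_eq hμ]
  simp

theorem ae_nonneg_expMeasure {μ : ℝ} (hμ : 0 < μ) : ∀ᵐ x ∂expMeasure μ, 0 ≤ x :=
  ae_iff.2 <| measure_mono_null (fun x (hx : ¬0 ≤ x) => (not_le.1 hx).le)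
    (expMeasure_Iic_zero hμ)

theorem map_eq_expMeasure {Ω : Type*} [MeasurableSpace Ω] {Pr : Measure Ω}
    [IsProbabilityMeasure Pr] {T : Ω → ℝ} (hT : Measurable T) {μ : ℝ} (hμ : 0 < μ)
    (hexp : ∀ t, 0 ≤ t → Pr {ω | t < T ω} = ENNReal.ofReal (Real.exp (-μ * t))) :
    Pr.map T = expMeasure μ := by
  have := isProbabilityMeasure_expMeasure hμ
  have := Measure.isProbabilityMeasure_map (μ := Pr) hT.aemeasurable
  have hIic : ∀ t, 0 ≤ t →
      Pr.map T (Set.Iic t) = ENNReal.ofReal (1 - Real.exp (-(μ * t))) := by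
    intro t ht
    rw [Measure.map_apply hT measurableSet_Iic, ← Set.compl_Ioi, Set.preimage_compl,
      prob_compl_eq_one_sub (hT measurableSet_Ioi), ← neg_mul,
      ENNReal.ofReal_sub _ (Real.exp_pos _).le, ENNReal.ofReal_one]
    exact congrArg (1 - ·) (hexp t ht)
  refine Measure.ext_of_Iic _ _ fun t => ?_
  rw [← ofReal_cdf (expMeasure μ), cdf_expMeasure_eq hμ]
  split_ifs with ht
  · exact hIic t ht
  · rw [ENNReal.ofReal_zero]
    exact measure_mono_null (Set.Iic_subset_Iic.2 (not_le.1 ht).le) (by simp [hIic 0 le_rfl])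

end Exponential

/-- Under the `r`-out-of-`n`:R repair policy of a semi-coherent system with i.i.d.
exponential component lifetimes, the probability that the first repair is due to a
system failure is `P(T_fail ≤ T_{r:n}) = Σ_{k=1}^{r} s_k`. -/
theorem stmt13 {Ω : Type*} [MeasurableSpace Ω] (Pr : Measure Ω) [IsProbabilityMeasure Pr]
    (n : ℕ) (Φ : (Fin n → Bool) → Bool)
    (hmono : ∀ x y : Fin n → Bool, (∀ i, x i ≤ y i) → Φ x ≤ Φ y)
    (hΦ0 : Φ (fun _ => false) = false) (hΦ1 : Φ (fun _ => true) = true)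
    (μ : ℝ) (hμ : 0 < μ)
    (T : Fin n → Ω → ℝ)
    (hmeas : ∀ i, Measurable (T i))
    (hindep : iIndepFun T Pr)
    (hexp : ∀ (i : Fin n) (t : ℝ), 0 ≤ t →
      Pr {ω | t < T i ω} = ENNReal.ofReal (Real.exp (-μ * t)))
    (r : ℕ) (hr1 : 1 ≤ r) (hrn : r ≤ n) :
    (Pr {ω | failTime n Φ (fun i => T i ω) ≤
        orderStat n (fun i => T i ω) ⟨r - 1, by omega⟩}).toReal =
      ∑ k ∈ Finset.Icc 1 r, structSig n Φ k := by
  have := isProbabilityMeasure_expMeasure hμ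
  have hlaw : Pr.map (fun ω i => T i ω) = Measure.pi fun _ => expMeasure μ := by
    rw [hindep.map_fun_eq_pi_map fun i => (hmeas i).aemeasurable]
    exact congrArg Measure.pi (funext fun i => map_eq_expMeasure (hmeas i) hμ (hexp i))
  set j : Fin n := ⟨r - 1, by omega⟩
  have hj : (j : ℕ) + 1 = r := Nat.sub_add_cancel hr1
  rw [← hj, ← pi_failTime_le_orderStat (ae_nonneg_expMeasure hμ) hmono hΦ0 hΦ1 j, ← hlaw,
    measureReal_def,
    Measure.map_apply₀ (aemeasurable_pi_lambda _ fun i => (hmeas i).aemeasurable)]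
  · rfl
  · rw [hlaw]
    exact nullMeasurableSet_failTime_le_orderStat (ae_nonneg_expMeasure hμ) hmono hΦ0 j
end

section
/- Let Φ be a semi-coherent structure function on n ≥ 1 components with structural signature s, let T_1,…,T_n be i.i.d. exponential random variables with rate μ > 0, and let T_fail := inf{ t ≥ 0 : Φ(1{T_1 > t},…,1{T_n > t}) = 0 }. Then the process signature coincides with the structural signature: for every j = 1,…,n, P( #{ i : T_i ≤ T_fail } = j ) = s_j; i.e., the number of failed components at the moment the system fails equals j with probability s_j. -/
open MeasureTheory ProbabilityTheory

namespace Stmt16Aux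

open Finset

variable {n : ℕ}

/-! ### Order helpers on `Fin n` -/

lemma fin_strictMono_le_apply (f : Fin n → Fin n) (hf : StrictMono f) (m : Fin n) : m ≤ f m := by
  by_contra h
  push_neg at h
  have hmaps : ∀ k ∈ Finset.Iic m, f k ∈ Finset.Iio m := by
    intro k hk
    rw [Finset.mem_Iic] at hk
    rw [Finset.mem_Iio]
    exact lt_of_le_of_lt (hf.monotone hk) h
  have hinj : Set.InjOn f (Finset.Iic m) := fun a _ b _ hab => hf.injective hab
  have hcard := Finset.card_le_card_of_injOn f hmaps hinj
  rw [Fin.card_Iic, Fin.card_Iio] at hcard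
  omega

lemma perm_eq_of_strictMono (x : Fin n → ℝ) (σ τ : Equiv.Perm (Fin n))
    (hσ : StrictMono (x ∘ σ)) (hτ : StrictMono (x ∘ τ)) : σ = τ := by
  set ρ : Equiv.Perm (Fin n) := σ.trans τ.symm with hρdef
  have hρap : ∀ m, ρ m = τ.symm (σ m) := fun m => rfl
  have hρ : StrictMono (⇑ρ) := by
    intro a b hab
    have h1 : (x ∘ σ) a < (x ∘ σ) b := hσ hab
    have h2 : (x ∘ τ) (ρ a) < (x ∘ τ) (ρ b) := by
      simpa [hρap, Function.comp] using h1
    exact hτ.lt_iff_lt.mp h2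
  have hρsymm : StrictMono (⇑ρ.symm) := by
    intro a b hab
    apply hρ.lt_iff_lt.mp
    simpa using hab
  have hfix : ∀ m, ρ m = m := by
    intro m
    have h1 := fin_strictMono_le_apply _ hρ m
    have h2 := fin_strictMono_le_apply _ hρsymm (ρ m)
    simp only [Equiv.symm_apply_apply] at h2
    exact le_antisymm h2 h1
  apply Equiv.ext
  intro m
  have := hfix m
  rw [hρap] at this
  have := congrArg τ this
  simpa using this

lemma card_filter_coe_lt (k : ℕ) (hk : k ≤ n) :
    (univ.filter fun m : Fin n => (m : ℕ) < k).card = k := by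
  have h : (univ.filter fun m : Fin n => (m : ℕ) < k).card = (Finset.range k).card := by
    apply Finset.card_bij' (fun (a : Fin n) _ => (a : ℕ))
      (fun b hb => (⟨b, by rw [Finset.mem_range] at hb; omega⟩ : Fin n))
    case hi => intro a ha; rw [Finset.mem_filter] at ha; rw [Finset.mem_range]; exact ha.2
    case hj => intro b hb; rw [Finset.mem_range] at hb; simp [hb]
    case left_inv => intro a _; simp
    case right_inv => intro b _; simp
  rw [h, Finset.card_range]

lemma filter_symm_card (σ : Equiv.Perm (Fin n)) (p : Fin n → Prop) [DecidablePred p] :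
    (univ.filter fun i => p (σ.symm i)).card = (univ.filter p).card := by
  apply Finset.card_bij' (fun i _ => σ.symm i) (fun m _ => σ m)
  case hi => intro i hi; rw [Finset.mem_filter] at hi ⊢; exact ⟨Finset.mem_univ _, hi.2⟩
  case hj => intro m hm; rw [Finset.mem_filter] at hm ⊢; simpa using hm.2
  case left_inv => intro i _; simp
  case right_inv => intro m _; simp


/-! ### Critical number of a permutation -/

def kA (σ : Equiv.Perm (Fin n)) (k : ℕ) : Fin n → Bool := fun i => decide (k ≤ (σ.symm i : ℕ))

lemma kA_le (σ : Equiv.Perm (Fin n)) {k k' : ℕ} (h : k ≤ k') (i : Fin n) :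
    kA σ k' i ≤ kA σ k i := by
  by_cases h' : k' ≤ (σ.symm i : ℕ)
  · simp [kA, h', h.trans h']
  · simp [kA, h']

lemma kA_zero (σ : Equiv.Perm (Fin n)) : kA σ 0 = fun _ => true := by
  funext i; simp [kA]

lemma kA_n (σ : Equiv.Perm (Fin n)) : kA σ n = fun _ => false := by
  funext i; simp [kA, Nat.not_le.mpr (σ.symm i).isLt]

variable (Φ : (Fin n → Bool) → Bool)

/-- The number of failures at which the system dies, if components fail in the order
`σ 0, σ 1, …`. -/
noncomputable def kcrit (σ : Equiv.Perm (Fin n)) : ℕ := sInf {k | Φ (kA σ k) = false}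

variable {Φ}

lemma kcrit_mem_n (hΦ0 : Φ (fun _ => false) = false) (σ : Equiv.Perm (Fin n)) :
    n ∈ {k | Φ (kA σ k) = false} := by
  simp only [Set.mem_setOf_eq, kA_n]; exact hΦ0

lemma kcrit_spec (hΦ0 : Φ (fun _ => false) = false) (σ : Equiv.Perm (Fin n)) :
    Φ (kA σ (kcrit Φ σ)) = false :=
  Nat.sInf_mem ⟨n, kcrit_mem_n hΦ0 σ⟩

lemma kcrit_le_n (hΦ0 : Φ (fun _ => false) = false) (σ : Equiv.Perm (Fin n)) :
    kcrit Φ σ ≤ n :=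
  Nat.sInf_le (kcrit_mem_n hΦ0 σ)

lemma kcrit_true {σ : Equiv.Perm (Fin n)} {m : ℕ} (hm : m < kcrit Φ σ) :
    Φ (kA σ m) = true := by
  have h := Nat.notMem_of_lt_sInf hm
  simp only [Set.mem_setOf_eq] at h
  cases hb : Φ (kA σ m)
  · exact absurd hb h
  · rfl

lemma kcrit_pos (hΦ1 : Φ (fun _ => true) = true) (hΦ0 : Φ (fun _ => false) = false)
    (σ : Equiv.Perm (Fin n)) : 1 ≤ kcrit Φ σ := by
  rcases Nat.eq_zero_or_pos (kcrit Φ σ) with h | h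
  · have := kcrit_spec hΦ0 σ
    rw [h, kA_zero, hΦ1] at this
    exact absurd this (by simp)
  · exact h

lemma kcrit_eq_iff (hmono : ∀ x y : Fin n → Bool, (∀ i, x i ≤ y i) → Φ x ≤ Φ y)
    (hΦ0 : Φ (fun _ => false) = false) {σ : Equiv.Perm (Fin n)} {j : ℕ} (hj : 1 ≤ j) :
    kcrit Φ σ = j ↔ (Φ (kA σ (j - 1)) = true ∧ Φ (kA σ j) = false) := by
  constructor
  · intro h
    refine ⟨kcrit_true (by omega), h ▸ kcrit_spec hΦ0 σ⟩
  · rintro ⟨h1, h2⟩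
    have hle : kcrit Φ σ ≤ j := Nat.sInf_le h2
    have hgt : j - 1 < kcrit Φ σ := by
      by_contra hc
      push_neg at hc
      have hmle := hmono _ _ (kA_le σ hc (k' := j - 1))
      rw [kcrit_spec hΦ0 σ, h1] at hmle
      exact absurd hmle (by decide)
    omega

/-! ### The deterministic count lemma -/

lemma count_eq (Φ : (Fin n → Bool) → Bool)
    (hmono : ∀ x y : Fin n → Bool, (∀ i, x i ≤ y i) → Φ x ≤ Φ y)
    (hΦ0 : Φ (fun _ => false) = false) (hΦ1 : Φ (fun _ => true) = true)
    (x : Fin n → ℝ) (σ : Equiv.Perm (Fin n))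
    (hsm : StrictMono (x ∘ σ)) (hpos : ∀ i, 0 < x i) :
    (univ.filter fun i => x i ≤ failTime n Φ x).card = kcrit Φ σ := by
  set k := kcrit Φ σ with hkdef
  have hk1 : 1 ≤ k := kcrit_pos hΦ1 hΦ0 σ
  have hkn : k ≤ n := kcrit_le_n hΦ0 σ
  have hnpos : 0 < n := lt_of_lt_of_le hk1 hkn
  set m₀ : Fin n := ⟨k - 1, by omega⟩ with hm₀
  set v := x (σ m₀) with hv
  have hvpos : 0 < v := hpos _
  have happ : ∀ i : Fin n, x i = (x ∘ σ) (σ.symm i) := by intro i; simp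
  have hle : ∀ i : Fin n, (x i ≤ v ↔ (σ.symm i : ℕ) < k) := by
    intro i
    rw [happ i, hv]
    rw [show x (σ m₀) = (x ∘ σ) m₀ from rfl, hsm.le_iff_le]
    rw [Fin.le_def]
    simp only [hm₀]
    omega
  have hge : ∀ i : Fin n, ((k : ℕ) - 1 ≤ (σ.symm i : ℕ) → v ≤ x i) := by
    intro i hi
    rw [happ i, hv]
    rw [show x (σ m₀) = (x ∘ σ) m₀ from rfl]
    exact hsm.monotone (by rw [Fin.le_def]; simpa [hm₀] using hi)
  have hft : failTime n Φ x = v := by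
    have hset : {t : ℝ | 0 ≤ t ∧ Φ (fun i => decide (t < x i)) = false} = Set.Ici v := by
      ext t
      simp only [Set.mem_setOf_eq, Set.mem_Ici]
      constructor
      · rintro ⟨ht0, htf⟩
        by_contra hvt
        push_neg at hvt
        have hstep : ∀ i, kA σ (k - 1) i ≤ (fun i => decide (t < x i)) i := by
          intro i
          by_cases hb : (k - 1) ≤ (σ.symm i : ℕ)
          · have hvx : v ≤ x i := hge i hb
            simp [kA, hb, decide_eq_true (lt_of_lt_of_le hvt hvx)]
          · simp [kA, hb]
        have hmle := hmono _ _ hstep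
        rw [kcrit_true (show k - 1 < k by omega), htf] at hmle
        exact absurd hmle (by decide)
      · intro hvt
        refine ⟨hvpos.le.trans hvt, ?_⟩
        have hstep : ∀ i, (fun i => decide (t < x i)) i ≤ kA σ k i := by
          intro i
          by_cases hb : k ≤ (σ.symm i : ℕ)
          · simp [kA, hb]
          · have hxv : x i ≤ v := (hle i).mpr (by omega)
            simp [kA, hb, decide_eq_false (not_lt.mpr (hxv.trans hvt))]
        have hmle := hmono _ _ hstep
        rw [kcrit_spec hΦ0 σ] at hmle
        cases hb : Φ (fun i => decide (t < x i))
        · rfl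
        · rw [hb] at hmle; exact absurd hmle (by decide)
    rw [failTime, hset, csInf_Ici]
  rw [hft]
  have hfe : (univ.filter fun i => x i ≤ v) = univ.filter fun i => ((σ.symm i : ℕ) < k) := by
    apply Finset.filter_congr
    intro i _
    simp only [hle i]
  rw [hfe, filter_symm_card σ (fun m => (m : ℕ) < k), card_filter_coe_lt k hkn]

/-! ### Counting permutations -/

def ntEquiv (f : Fin n → Bool) : {m : Fin n // ¬ f m = true} ≃ {m : Fin n // f m = false} :=
  Equiv.subtypeEquivRight (fun m => by simp)

lemma subtypeCongr_apply_pos {P Q : Fin n → Prop} [DecidablePred P] [DecidablePred Q]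
    (e : {m : Fin n // P m} ≃ {m : Fin n // Q m})
    (f : {m : Fin n // ¬ P m} ≃ {m : Fin n // ¬ Q m}) (m : Fin n) (h : P m) :
    Equiv.subtypeCongr e f m = (e ⟨m, h⟩ : {m : Fin n // Q m}).1 := by
  simp [Equiv.subtypeCongr, Equiv.sumCompl_symm_apply_of_pos h]

lemma subtypeCongr_apply_neg {P Q : Fin n → Prop} [DecidablePred P] [DecidablePred Q]
    (e : {m : Fin n // P m} ≃ {m : Fin n // Q m})
    (f : {m : Fin n // ¬ P m} ≃ {m : Fin n // ¬ Q m}) (m : Fin n) (h : ¬ P m) :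
    Equiv.subtypeCongr e f m = (f ⟨m, h⟩ : {m : Fin n // ¬ Q m}).1 := by
  simp [Equiv.subtypeCongr, Equiv.sumCompl_symm_apply_of_neg h]

def fiberEquiv (x y : Fin n → Bool) :
    {σ : Equiv.Perm (Fin n) // ∀ m, x (σ m) = y m} ≃
      (({m : Fin n // y m = true} ≃ {i : Fin n // x i = true}) ×
        ({m : Fin n // y m = false} ≃ {i : Fin n // x i = false})) where
  toFun σ := ⟨Equiv.subtypeEquiv σ.1 fun m => by rw [σ.2 m],
              Equiv.subtypeEquiv σ.1 fun m => by rw [σ.2 m]⟩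
  invFun p := by
    refine ⟨Equiv.subtypeCongr p.1 ((ntEquiv y).trans (p.2.trans (ntEquiv x).symm)), ?_⟩
    intro m
    by_cases h : y m = true
    · rw [subtypeCongr_apply_pos _ _ m h]
      rw [(p.1 ⟨m, h⟩).2, h]
    · rw [subtypeCongr_apply_neg _ _ m h]
      have h2 := (((ntEquiv y).trans (p.2.trans (ntEquiv x).symm)) ⟨m, h⟩).2
      simp only [Bool.not_eq_true] at h2 h ⊢
      rw [h2, h]
  left_inv := by
    rintro ⟨σ, hσ⟩
    apply Subtype.ext
    apply Equiv.ext
    intro m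
    by_cases h : y m = true
    · rw [subtypeCongr_apply_pos _ _ m h]
      rfl
    · rw [subtypeCongr_apply_neg _ _ m h]
      rfl
  right_inv := by
    rintro ⟨e, f⟩
    refine Prod.ext ?_ ?_
    · apply Equiv.ext
      rintro ⟨m, h⟩
      apply Subtype.ext
      show Equiv.subtypeCongr e ((ntEquiv y).trans (f.trans (ntEquiv x).symm)) m = _
      rw [subtypeCongr_apply_pos _ _ m h]
    · apply Equiv.ext
      rintro ⟨m, h⟩
      apply Subtype.ext
      show Equiv.subtypeCongr e ((ntEquiv y).trans (f.trans (ntEquiv x).symm)) m = _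
      rw [subtypeCongr_apply_neg _ _ m (by simp [h])]
      rfl

lemma card_false_of_card_true (f : Fin n → Bool) :
    (univ.filter fun m => f m = false).card = n - (univ.filter fun m => f m = true).card := by
  have h := Finset.card_filter_add_card_filter_not
    (s := (univ : Finset (Fin n))) (p := fun m => f m = true)
  rw [Finset.card_univ, Fintype.card_fin] at h
  have h2 : (univ.filter fun m => ¬ f m = true) = (univ.filter fun m => f m = false) := by
    apply Finset.filter_congr
    intro m _
    simp
  rw [h2] at h
  omega

lemma card_fiber (x y : Fin n → Bool)
    (h : (univ.filter fun i => x i = true).card = (univ.filter fun m => y m = true).card) :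
    (univ.filter fun σ : Equiv.Perm (Fin n) => ∀ m, x (σ m) = y m).card
      = Nat.factorial (univ.filter fun m => y m = true).card
        * Nat.factorial (univ.filter fun m => y m = false).card := by
  rw [← Fintype.card_subtype]
  rw [Fintype.card_congr (fiberEquiv x y), Fintype.card_prod]
  have hct : Fintype.card {m : Fin n // y m = true}
      = (univ.filter fun m => y m = true).card := Fintype.card_subtype _
  have hcf : Fintype.card {m : Fin n // y m = false}
      = (univ.filter fun m => y m = false).card := Fintype.card_subtype _
  have hxt : Fintype.card {i : Fin n // x i = true} = Fintype.card {m : Fin n // y m = true} := by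
    rw [Fintype.card_subtype, Fintype.card_subtype, h]
  have hxf : Fintype.card {i : Fin n // x i = false}
      = Fintype.card {m : Fin n // y m = false} := by
    rw [Fintype.card_subtype, Fintype.card_subtype, card_false_of_card_true,
      card_false_of_card_true, h]
  rw [Fintype.card_equiv (Fintype.equivOfCardEq hxt.symm),
    Fintype.card_equiv (Fintype.equivOfCardEq hxf.symm), hct, hcf]

lemma card_true_add_card_false (f : Fin n → Bool) :
    (univ.filter fun m => f m = true).card + (univ.filter fun m => f m = false).card = n := by
  have h := Finset.card_filter_add_card_filter_not
    (s := (univ : Finset (Fin n))) (p := fun m => f m = true)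
  rw [Finset.card_univ, Fintype.card_fin] at h
  have h2 : (univ.filter fun m => ¬ f m = true) = (univ.filter fun m => f m = false) := by
    apply Finset.filter_congr; intro m _; simp
  rw [h2] at h
  exact h

lemma card_y_true (k : ℕ) (hk : k ≤ n) :
    (univ.filter fun m : Fin n => (decide (k ≤ (m : ℕ)) : Bool) = true).card = n - k := by
  have h1 : (univ.filter fun m : Fin n => (decide (k ≤ (m : ℕ)) : Bool) = true)
      = univ.filter fun m : Fin n => ¬ ((m : ℕ) < k) := by
    apply Finset.filter_congr; intro m _; simp [Nat.not_lt]
  have h2 := Finset.card_filter_add_card_filter_not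
    (s := (univ : Finset (Fin n))) (p := fun m : Fin n => (m : ℕ) < k)
  rw [Finset.card_univ, Fintype.card_fin, card_filter_coe_lt k hk] at h2
  rw [h1]
  omega

lemma card_y_false (k : ℕ) (hk : k ≤ n) :
    (univ.filter fun m : Fin n => (decide (k ≤ (m : ℕ)) : Bool) = false).card = k := by
  have h1 : (univ.filter fun m : Fin n => (decide (k ≤ (m : ℕ)) : Bool) = false)
      = univ.filter fun m : Fin n => ((m : ℕ) < k) := by
    apply Finset.filter_congr; intro m _; simp [Nat.not_le]
  rw [h1, card_filter_coe_lt k hk]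

lemma card_kA_false (σ : Equiv.Perm (Fin n)) (k : ℕ) (hk : k ≤ n) :
    (univ.filter fun i => kA σ k i = false).card = k := by
  have h1 : (univ.filter fun i => kA σ k i = false)
      = univ.filter fun i => ((σ.symm i : ℕ) < k) := by
    apply Finset.filter_congr; intro i _; simp [kA, Nat.not_le]
  rw [h1, filter_symm_card σ (fun m => (m : ℕ) < k), card_filter_coe_lt k hk]

lemma card_perm_true (Φ : (Fin n → Bool) → Bool) (k : ℕ) (hk : k ≤ n) :
    (univ.filter fun σ : Equiv.Perm (Fin n) => Φ (kA σ k) = true).card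
      = (univ.filter fun x : Fin n → Bool =>
          (univ.filter fun i => x i = false).card = k ∧ Φ x = true).card
        * (Nat.factorial (n - k) * Nat.factorial k) := by
  set t := univ.filter fun x : Fin n → Bool =>
      (univ.filter fun i => x i = false).card = k ∧ Φ x = true with ht
  have hmem : ∀ σ ∈ univ.filter (fun σ : Equiv.Perm (Fin n) => Φ (kA σ k) = true),
      kA σ k ∈ t := by
    intro σ hσ
    rw [Finset.mem_filter] at hσ ⊢
    exact ⟨mem_univ _, card_kA_false σ k hk, hσ.2⟩
  rw [Finset.card_eq_sum_card_fiberwise hmem]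
  have hfib : ∀ x ∈ t, ((univ.filter fun σ : Equiv.Perm (Fin n) => Φ (kA σ k) = true).filter
      (fun σ => kA σ k = x)).card = Nat.factorial (n - k) * Nat.factorial k := by
    intro x hx
    rw [ht, Finset.mem_filter] at hx
    have hxf : (univ.filter fun i => x i = false).card = k := hx.2.1
    have hxt : (univ.filter fun i => x i = true).card = n - k := by
      have := card_true_add_card_false x
      omega
    have heq : ((univ.filter fun σ : Equiv.Perm (Fin n) => Φ (kA σ k) = true).filter
        (fun σ => kA σ k = x))
        = univ.filter (fun σ : Equiv.Perm (Fin n) => ∀ m, x (σ m) = decide (k ≤ (m : ℕ))) := by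
      ext σ
      simp only [Finset.mem_filter, Finset.mem_univ, true_and]
      constructor
      · rintro ⟨h1, h2⟩
        intro m
        rw [← h2]
        simp [kA]
      · intro hall
        have h2 : kA σ k = x := by
          funext i
          have hh := hall (σ.symm i)
          simp only [Equiv.apply_symm_apply] at hh
          rw [kA, hh]
        refine ⟨?_, h2⟩
        rw [h2]
        exact hx.2.2
    rw [heq, card_fiber x (fun m => decide (k ≤ (m : ℕ)))
      (by rw [hxt, card_y_true k hk])]
    rw [card_y_true k hk, card_y_false k hk]
  rw [Finset.sum_congr rfl hfib, Finset.sum_const, smul_eq_mul]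

lemma kA_filter_subset (Φ : (Fin n → Bool) → Bool)
    (hmono : ∀ x y : Fin n → Bool, (∀ i, x i ≤ y i) → Φ x ≤ Φ y) {j : ℕ} (hj : 1 ≤ j) :
    (univ.filter fun σ : Equiv.Perm (Fin n) => Φ (kA σ j) = true)
      ⊆ univ.filter fun σ : Equiv.Perm (Fin n) => Φ (kA σ (j - 1)) = true := by
  intro σ hσ
  rw [Finset.mem_filter] at hσ ⊢
  refine ⟨mem_univ _, ?_⟩
  have hh := hmono _ _ (kA_le σ (show j - 1 ≤ j by omega))
  rw [hσ.2] at hh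
  cases hb : Φ (kA σ (j - 1))
  · rw [hb] at hh; exact absurd hh (by decide)
  · rfl

lemma kcrit_filter_eq (Φ : (Fin n → Bool) → Bool)
    (hmono : ∀ x y : Fin n → Bool, (∀ i, x i ≤ y i) → Φ x ≤ Φ y)
    (hΦ0 : Φ (fun _ => false) = false) {j : ℕ} (hj : 1 ≤ j) :
    (univ.filter fun σ : Equiv.Perm (Fin n) => kcrit Φ σ = j)
      = (univ.filter fun σ : Equiv.Perm (Fin n) => Φ (kA σ (j - 1)) = true)
        \ (univ.filter fun σ : Equiv.Perm (Fin n) => Φ (kA σ j) = true) := by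
  ext σ
  simp only [Finset.mem_sdiff, Finset.mem_filter, Finset.mem_univ, true_and]
  rw [kcrit_eq_iff hmono hΦ0 hj]
  simp [Bool.not_eq_true]

lemma exp_no_atoms (ν : Measure ℝ) [IsProbabilityMeasure ν] (μr : ℝ)
    (hIoi : ∀ t : ℝ, ν (Set.Ioi t) = if 0 ≤ t then ENNReal.ofReal (Real.exp (-μr * t)) else 1)
    (c : ℝ) : ν {c} = 0 := by
  rcases le_or_gt c 0 with hc | hc
  · have hIic : ν (Set.Iic (0 : ℝ)) = 0 := by
      have h := measure_compl (μ := ν) (measurableSet_Ioi (a := (0:ℝ))) (measure_ne_top _ _)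
      rw [Set.compl_Ioi, measure_univ, hIoi 0] at h
      simpa using h
    refine measure_mono_null ?_ hIic
    intro z hz
    simp only [Set.mem_singleton_iff] at hz
    subst hz
    exact hc
  · have hIci : ν (Set.Ici c) = ENNReal.ofReal (Real.exp (-μr * c)) := by
      have hInter : Set.Ici c = ⋂ m : ℕ, Set.Ioi (c - 1 / (m + 1)) := by
        ext z
        simp only [Set.mem_Ici, Set.mem_iInter, Set.mem_Ioi]
        constructor
        · intro hz m
          have hp : (0 : ℝ) < 1 / ((m : ℝ) + 1) := by positivity
          linarith
        · intro hz
          by_contra hzc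
          push_neg at hzc
          obtain ⟨m, hm⟩ := exists_nat_one_div_lt (show (0 : ℝ) < c - z by linarith)
          have := hz m
          linarith
      have hanti : Antitone fun m : ℕ => Set.Ioi (c - 1 / ((m : ℝ) + 1)) := by
        intro a b hab
        apply Set.Ioi_subset_Ioi
        have h1 : (1 : ℝ) / ((b : ℝ) + 1) ≤ 1 / ((a : ℝ) + 1) := by
          apply one_div_le_one_div_of_le
          · positivity
          · have : (a : ℝ) ≤ b := by exact_mod_cast hab
            linarith
        linarith
      have htend := tendsto_measure_iInter_atTop (μ := ν)
        (fun m : ℕ => measurableSet_Ioi.nullMeasurableSet) hanti ⟨0, measure_ne_top _ _⟩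
      rw [← hInter] at htend
      have htend2 : Filter.Tendsto (fun m : ℕ => ν (Set.Ioi (c - 1 / ((m : ℝ) + 1))))
          Filter.atTop (nhds (ENNReal.ofReal (Real.exp (-μr * c)))) := by
        have hlim : Filter.Tendsto (fun m : ℕ => c - 1 / ((m : ℝ) + 1)) Filter.atTop (nhds c) := by
          have := tendsto_one_div_add_atTop_nhds_zero_nat (𝕜 := ℝ)
          have h2 := Filter.Tendsto.const_sub c this
          simpa using h2
        have hmain : Filter.Tendsto (fun m : ℕ => ENNReal.ofReal
            (Real.exp (-μr * (c - 1 / ((m : ℝ) + 1))))) Filter.atTop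
            (nhds (ENNReal.ofReal (Real.exp (-μr * c)))) := by
          apply (ENNReal.continuous_ofReal.tendsto _).comp
          apply (Real.continuous_exp.tendsto _).comp
          exact (hlim.const_mul (-μr))
        apply hmain.congr'
        obtain ⟨m₀, hm₀⟩ := exists_nat_one_div_lt hc
        refine Filter.eventually_atTop.2 ⟨m₀, fun m hm => ?_⟩
        dsimp only
        rw [hIoi, if_pos]
        have h1 : (1 : ℝ) / ((m : ℝ) + 1) ≤ 1 / ((m₀ : ℝ) + 1) := by
          apply one_div_le_one_div_of_le
          · positivity
          · have : (m₀ : ℝ) ≤ m := by exact_mod_cast hm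
            linarith
        linarith
      exact tendsto_nhds_unique htend htend2
    have hsing : {c} = Set.Ici c \ Set.Ioi c := by
      ext z
      simp only [Set.mem_singleton_iff, Set.mem_diff, Set.mem_Ici, Set.mem_Ioi, not_lt]
      constructor
      · rintro rfl; exact ⟨le_rfl, le_rfl⟩
      · rintro ⟨h1, h2⟩; exact le_antisymm h2 h1
    rw [hsing, measure_diff Set.Ioi_subset_Ici_self measurableSet_Ioi.nullMeasurableSet
      (measure_ne_top _ _), hIci, hIoi c, if_pos hc.le, tsub_self]

lemma div_fact_eq (W : ℕ) {k n : ℕ} (hk : k ≤ n) :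
    ((W * (Nat.factorial (n - k) * Nat.factorial k) : ℕ) : ℝ) / (Nat.factorial n : ℝ)
      = (W : ℝ) / (n.choose k : ℝ) := by
  have hid : (n.choose k) * Nat.factorial k * Nat.factorial (n - k) = Nat.factorial n :=
    Nat.choose_mul_factorial_mul_factorial hk
  have hc0 : (0 : ℝ) < (n.choose k : ℝ) := by exact_mod_cast Nat.choose_pos hk
  have hf0 : (0 : ℝ) < (Nat.factorial n : ℝ) := by exact_mod_cast Nat.factorial_pos n
  rw [div_eq_div_iff hf0.ne' hc0.ne']
  push_cast [← hid]
  ring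

end Stmt16Aux

open Stmt16Aux in
/-- For a semi-coherent system with i.i.d. exponential component lifetimes, the
process signature coincides with the structural signature: the number of failed
components at the system failure time equals `j` with probability `s_j`. -/
theorem stmt16 {Ω : Type*} [MeasurableSpace Ω] (Pr : Measure Ω) [IsProbabilityMeasure Pr]
    (n : ℕ) (hn : 1 ≤ n) (Φ : (Fin n → Bool) → Bool)
    (hmono : ∀ x y : Fin n → Bool, (∀ i, x i ≤ y i) → Φ x ≤ Φ y)
    (hΦ0 : Φ (fun _ => false) = false) (hΦ1 : Φ (fun _ => true) = true)
    (μ : ℝ) (hμ : 0 < μ)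
    (T : Fin n → Ω → ℝ)
    (hmeas : ∀ i, Measurable (T i))
    (hindep : iIndepFun T Pr)
    (hexp : ∀ (i : Fin n) (t : ℝ), 0 ≤ t →
      Pr {ω | t < T i ω} = ENNReal.ofReal (Real.exp (-μ * t)))
    (j : ℕ) (hj1 : 1 ≤ j) (hjn : j ≤ n) :
    (Pr {ω | (Finset.univ.filter (fun i : Fin n =>
        T i ω ≤ failTime n Φ (fun i' => T i' ω))).card = j}).toReal =
      structSig n Φ j := by
  have hJmeas : Measurable (fun ω (i : Fin n) => T i ω) := measurable_pi_lambda _ hmeas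
  set J : Ω → (Fin n → ℝ) := fun ω i => T i ω with hJdef
  have hIoiPr : ∀ (i : Fin n) (t : ℝ), Pr (T i ⁻¹' Set.Ioi t)
      = if 0 ≤ t then ENNReal.ofReal (Real.exp (-μ * t)) else 1 := by
    intro i t
    split_ifs with h
    · exact hexp i t h
    · push_neg at h
      refine le_antisymm prob_le_one ?_
      have h0 : Pr {ω | 0 < T i ω} = 1 := by simpa using hexp i 0 le_rfl
      rw [← h0]
      exact measure_mono (fun ω hω => lt_trans h hω)
  have i0 : Fin n := ⟨0, hn⟩
  set ν : Measure ℝ := Pr.map (T i0) with hνdef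
  haveI hνprob : IsProbabilityMeasure ν := Measure.isProbabilityMeasure_map (hmeas i0).aemeasurable
  have hmapIoi : ∀ (i : Fin n) (t : ℝ), (Pr.map (T i)) (Set.Ioi t)
      = if 0 ≤ t then ENNReal.ofReal (Real.exp (-μ * t)) else 1 := by
    intro i t
    rw [Measure.map_apply (hmeas i) measurableSet_Ioi]
    exact hIoiPr i t
  have hmap : ∀ i, Pr.map (T i) = ν := by
    intro i
    haveI : IsProbabilityMeasure (Pr.map (T i)) :=
      Measure.isProbabilityMeasure_map (hmeas i).aemeasurable
    refine MeasureTheory.Measure.ext_of_Iic (Pr.map (T i)) ν (fun a => ?_)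
    have hcompl : ∀ (ρ : Measure ℝ), IsProbabilityMeasure ρ →
        ρ (Set.Iic a) = 1 - ρ (Set.Ioi a) := by
      intro ρ hρ
      rw [← Set.compl_Ioi, measure_compl measurableSet_Ioi (measure_ne_top _ _), measure_univ]
    rw [hcompl _ inferInstance, hcompl _ inferInstance, hνdef, hmapIoi i a, hmapIoi i0 a]
  have hνIoi : ∀ t : ℝ, ν (Set.Ioi t)
      = if 0 ≤ t then ENNReal.ofReal (Real.exp (-μ * t)) else 1 := by
    intro t
    rw [hνdef]
    exact hmapIoi i0 t
  have hatom : ∀ c : ℝ, ν {c} = 0 := exp_no_atoms ν μ hνIoi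
  have hpos0 : ∀ i, Pr {ω | T i ω ≤ 0} = 0 := by
    intro i
    have hc : {ω | T i ω ≤ 0} = (T i ⁻¹' Set.Ioi 0)ᶜ := by
      ext ω
      simp [not_lt]
    rw [hc, measure_compl ((hmeas i) measurableSet_Ioi) (measure_ne_top _ _), measure_univ,
      hIoiPr i 0, if_pos le_rfl]
    simp
  have hdiag : ∀ i i' : Fin n, i ≠ i' → Pr {ω | T i ω = T i' ω} = 0 := by
    intro i i' hij
    have hIF : IndepFun (T i) (T i') Pr := hindep.indepFun hij
    have hmapp : Pr.map (fun ω => (T i ω, T i' ω)) = ν.prod ν := by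
      rw [(indepFun_iff_map_prod_eq_prod_map_map (hmeas i).aemeasurable
        (hmeas i').aemeasurable).mp hIF, hmap i, hmap i']
    have hD : MeasurableSet {p : ℝ × ℝ | p.1 = p.2} :=
      measurableSet_eq_fun measurable_fst measurable_snd
    have hpre : {ω | T i ω = T i' ω} = (fun ω => (T i ω, T i' ω)) ⁻¹' {p : ℝ × ℝ | p.1 = p.2} :=
      rfl
    rw [hpre, ← Measure.map_apply ((hmeas i).prodMk (hmeas i')) hD, hmapp,
      Measure.prod_apply hD]
    have hfib : ∀ a : ℝ, (Prod.mk a ⁻¹' {p : ℝ × ℝ | p.1 = p.2}) = {a} := by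
      intro a
      ext b
      simp [eq_comm]
    simp only [hfib, hatom]
    simp
  set N : Set Ω := (⋃ i, {ω | T i ω ≤ 0}) ∪ ⋃ i, ⋃ i', ⋃ (_ : i ≠ i'), {ω | T i ω = T i' ω}
    with hNdef
  have hNnull : Pr N = 0 := by
    rw [hNdef]
    apply measure_union_null
    · exact measure_iUnion_null fun i => hpos0 i
    · exact measure_iUnion_null fun i => measure_iUnion_null fun i' =>
        measure_iUnion_null fun h => hdiag i i' h
  have hGood : ∀ ω, ω ∉ N → (∀ i, 0 < T i ω) ∧
      ∃ σ : Equiv.Perm (Fin n), StrictMono ((fun i => T i ω) ∘ σ) := by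
    intro ω hω
    rw [hNdef] at hω
    simp only [Set.mem_union, Set.mem_iUnion, Set.mem_setOf_eq, not_or, not_exists] at hω
    obtain ⟨h1, h2⟩ := hω
    have hpos' : ∀ i, 0 < T i ω := fun i => not_le.mp (h1 i)
    have hinj : Function.Injective (fun i => T i ω) := by
      intro a b hab
      by_contra hne
      exact h2 a b hne hab
    exact ⟨hpos', ⟨Tuple.sort (fun i => T i ω),
      (Tuple.monotone_sort _).strictMono_of_injective (hinj.comp (Equiv.injective _))⟩⟩
  have hpi : Measure.pi (fun _ : Fin n => ν) = Pr.map J := by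
    refine (Measure.pi_eq fun s hs => ?_)
    rw [Measure.map_apply hJmeas (MeasurableSet.univ_pi hs)]
    have hpre : J ⁻¹' Set.pi Set.univ s = ⋂ i ∈ Finset.univ, T i ⁻¹' s i := by
      ext ω
      simp [hJdef, Set.mem_pi]
    rw [hpre, hindep.measure_inter_preimage_eq_mul Finset.univ (fun i _ => hs i)]
    refine Finset.prod_congr rfl fun i _ => ?_
    rw [← hmap i, Measure.map_apply (hmeas i) (hs i)]
  have hSmeas : ∀ σ : Equiv.Perm (Fin n), MeasurableSet {z : Fin n → ℝ | StrictMono (z ∘ σ)} := by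
    intro σ
    have hset : {z : Fin n → ℝ | StrictMono (z ∘ σ)}
        = ⋂ (a : Fin n) (b : Fin n) (_ : a < b), {z : Fin n → ℝ | z (σ a) < z (σ b)} := by
      ext z
      simp only [Set.mem_iInter, Set.mem_setOf_eq]
      exact ⟨fun h a b hab => h hab, fun h a b hab => h a b hab⟩
    rw [hset]
    exact MeasurableSet.iInter fun a => MeasurableSet.iInter fun b =>
      MeasurableSet.iInter fun _ =>
        measurableSet_lt (measurable_pi_apply _) (measurable_pi_apply _)
  have hidmeas : MeasurableSet {z : Fin n → ℝ | StrictMono z} := by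
    simpa using hSmeas (Equiv.refl (Fin n))
  have hEprob : ∀ σ : Equiv.Perm (Fin n),
      Pr {ω | StrictMono ((fun i => T i ω) ∘ σ)}
        = Measure.pi (fun _ : Fin n => ν) {z : Fin n → ℝ | StrictMono z} := by
    intro σ
    have h1 : {ω | StrictMono ((fun i => T i ω) ∘ σ)}
        = J ⁻¹' {z : Fin n → ℝ | StrictMono (z ∘ σ)} := rfl
    rw [h1, ← Measure.map_apply hJmeas (hSmeas σ), ← hpi]
    have hmp := measurePreserving_piCongrLeft (fun _ : Fin n => ν) σ.symm
    have hcoe : ∀ z : Fin n → ℝ,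
        (MeasurableEquiv.piCongrLeft (fun _ : Fin n => ℝ) σ.symm) z = z ∘ σ := by
      intro z
      funext b
      rw [MeasurableEquiv.coe_piCongrLeft]
      have h2 := Equiv.piCongrLeft_apply_apply (fun _ : Fin n => ℝ) σ.symm z (σ b)
      simpa using h2
    have hpre2 : (MeasurableEquiv.piCongrLeft (fun _ : Fin n => ℝ) σ.symm) ⁻¹'
        {z : Fin n → ℝ | StrictMono z} = {z : Fin n → ℝ | StrictMono (z ∘ σ)} := by
      ext z
      simp only [Set.mem_preimage, Set.mem_setOf_eq, hcoe z]
    rw [← hpre2]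
    exact hmp.measure_preimage hidmeas.nullMeasurableSet
  set cP : ENNReal := Measure.pi (fun _ : Fin n => ν) {z : Fin n → ℝ | StrictMono z} with hcPdef
  have hEmeas : ∀ σ : Equiv.Perm (Fin n),
      MeasurableSet {ω | StrictMono ((fun i => T i ω) ∘ σ)} :=
    fun σ => hJmeas (hSmeas σ)
  have hdisj : ∀ (s : Finset (Equiv.Perm (Fin n))),
      (↑s : Set (Equiv.Perm (Fin n))).PairwiseDisjoint
        (fun σ => {ω | StrictMono ((fun i => T i ω) ∘ σ)}) := by
    intro s σ _ τ _ hστ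
    refine Set.disjoint_left.mpr fun ω hσω hτω => hστ ?_
    exact perm_eq_of_strictMono (fun i => T i ω) σ τ hσω hτω
  have hsum : ∀ (s : Finset (Equiv.Perm (Fin n))),
      Pr (⋃ σ ∈ s, {ω | StrictMono ((fun i => T i ω) ∘ σ)}) = s.card * cP := by
    intro s
    rw [measure_biUnion_finset (hdisj s) (fun σ _ => hEmeas σ)]
    rw [Finset.sum_congr rfl (fun σ _ => hEprob σ), Finset.sum_const, nsmul_eq_mul]
  have htot : (Nat.factorial n : ENNReal) * cP = 1 := by
    have h1 : Pr (⋃ σ ∈ (Finset.univ : Finset (Equiv.Perm (Fin n))),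
        {ω | StrictMono ((fun i => T i ω) ∘ σ)}) = 1 := by
      refine le_antisymm prob_le_one ?_
      have hsub : Nᶜ ⊆ ⋃ σ ∈ (Finset.univ : Finset (Equiv.Perm (Fin n))),
          {ω | StrictMono ((fun i => T i ω) ∘ σ)} := by
        intro ω hω
        obtain ⟨-, σ, hσ⟩ := hGood ω hω
        exact Set.mem_biUnion (Finset.mem_univ σ) hσ
      calc (1 : ENNReal) = Pr Set.univ := measure_univ.symm
        _ ≤ Pr N + Pr Nᶜ := by
            rw [← Set.union_compl_self N]
            exact measure_union_le _ _
        _ = Pr Nᶜ := by rw [hNnull, zero_add]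
        _ ≤ _ := measure_mono hsub
    have h2 := hsum (Finset.univ : Finset (Equiv.Perm (Fin n)))
    rw [h1, Finset.card_univ, Fintype.card_perm, Fintype.card_fin] at h2
    exact h2.symm
  set Sj : Finset (Equiv.Perm (Fin n)) := Finset.univ.filter (fun σ => kcrit Φ σ = j)
    with hSjdef
  have hae : {ω | (Finset.univ.filter (fun i : Fin n =>
        T i ω ≤ failTime n Φ (fun i' => T i' ω))).card = j}
      =ᵐ[Pr] (⋃ σ ∈ Sj, {ω | StrictMono ((fun i => T i ω) ∘ σ)}) := by
    have hnm : ∀ᵐ ω ∂Pr, ω ∉ N := measure_eq_zero_iff_ae_notMem.mp hNnull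
    rw [Filter.eventuallyEq_set]
    filter_upwards [hnm] with ω hω
    obtain ⟨hpos', σ, hσ⟩ := hGood ω hω
    have hcard := count_eq Φ hmono hΦ0 hΦ1 (fun i' => T i' ω) σ hσ hpos'
    constructor
    · intro hA
      change _ = j at hA
      have hmemSj : σ ∈ Sj := by
        rw [hSjdef]
        exact Finset.mem_filter.mpr ⟨Finset.mem_univ _, hcard.symm.trans hA⟩
      exact Set.mem_biUnion hmemSj hσ
    · intro hU
      rw [Set.mem_iUnion₂] at hU
      obtain ⟨τ, hτmem, hτ⟩ := hU
      have hτj : kcrit Φ τ = j := by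
        rw [hSjdef] at hτmem
        exact (Finset.mem_filter.mp hτmem).2
      have hcard' := count_eq Φ hmono hΦ0 hΦ1 (fun i' => T i' ω) τ hτ hpos'
      exact hcard'.trans hτj
  have hPrA : Pr {ω | (Finset.univ.filter (fun i : Fin n =>
        T i ω ≤ failTime n Φ (fun i' => T i' ω))).card = j} = Sj.card * cP := by
    rw [measure_congr hae]
    exact hsum Sj
  have hfac0 : (Nat.factorial n : ENNReal) ≠ 0 := by
    simp [Nat.factorial_ne_zero]
  have hfactop : (Nat.factorial n : ENNReal) ≠ ⊤ := ENNReal.natCast_ne_top _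
  have hcPval : cP = (Nat.factorial n : ENNReal)⁻¹ := by
    have h := congrArg (fun z => (Nat.factorial n : ENNReal)⁻¹ * z) htot
    change (Nat.factorial n : ENNReal)⁻¹ * ((Nat.factorial n : ENNReal) * cP) = (Nat.factorial n : ENNReal)⁻¹ * 1 at h
    rwa [← mul_assoc, ENNReal.inv_mul_cancel hfac0 hfactop, one_mul, mul_one] at h
  rw [hPrA, hcPval, ENNReal.toReal_mul, ENNReal.toReal_inv]
  simp only [ENNReal.toReal_natCast]
  have hCsub := kA_filter_subset Φ hmono (n := n) hj1
  have hSjcard : Sj.card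
      = (Finset.univ.filter fun σ : Equiv.Perm (Fin n) => Φ (kA σ (j - 1)) = true).card
        - (Finset.univ.filter fun σ : Equiv.Perm (Fin n) => Φ (kA σ j) = true).card := by
    rw [hSjdef, kcrit_filter_eq Φ hmono hΦ0 hj1, Finset.card_sdiff_of_subset hCsub]
  have hCle : (Finset.univ.filter fun σ : Equiv.Perm (Fin n) => Φ (kA σ j) = true).card
      ≤ (Finset.univ.filter fun σ : Equiv.Perm (Fin n) => Φ (kA σ (j - 1)) = true).card :=
    Finset.card_le_card hCsub
  rw [hSjcard, Nat.cast_sub hCle, card_perm_true Φ (j - 1) (by omega), card_perm_true Φ j hjn]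
  rw [structSig, Sbar, Sbar, sub_mul, ← div_eq_mul_inv, ← div_eq_mul_inv]
  rw [div_fact_eq _ (show j - 1 ≤ n by omega), div_fact_eq _ hjn]
end
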